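/- arXiv:1709.09918 — 9 statements merged into one kernel-verified Lean document; each statement's English description precedes it below -/
import Mathlib

section
/- Let a : [-1,0] → ℝ be Lipschitz continuous with a(s) > 0 for all s, let μ_cr := (∫_{-1}^0 a(t)^3 dt)^{-1}, and let ν < 0. Suppose Φ : [-1,0] → ℝ is continuously differentiable with Φ(-1) = 0, the function g(s) := Φ'(s)/a(s)^3 is continuously differentiable on [-1,0] with g'(s) = -ν Φ(s)/a(s) for all s ∈ (-1,0), and the boundary condition -Φ'(0)/a(0)^3 + μ_cr Φ(0) = 0 holds. Then Φ ≡ 0. (That is, the Sturm–Liouville problem -(Φ'/a^3)' = ν Φ/a, Φ(-1) = 0, -Φ'(0)/a(0)^3 + μ_cr Φ(0) = 0 has no negative eigenvalues, so ν_0 = 0 is its smallest eigenvalue.) -/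
/-!
Multiply the equation by `Φ` and integrate by parts: by `Φ(-1) = 0` and the boundary condition
at `0`, `-ν ∫ Φ²/a + ∫ Φ'²/a³ = μcr Φ(0)²`. As `Φ(0) = ∫ Φ'`, the Cauchy–Schwarz inequality with
weight `a³` gives `Φ(0)² ≤ (∫ a³) (∫ Φ'²/a³)`, i.e. `μcr Φ(0)² ≤ ∫ Φ'²/a³`. Hence
`-ν ∫ Φ²/a ≤ 0`, so for `ν < 0` the continuous nonnegative function `Φ²/a` has zero integral and
vanishes.
-/

open Set intervalIntegral
open MeasureTheory (volume)

theorem sq_integral_le_integral_mul_integral_sq_div {f w : ℝ → ℝ} {a b : ℝ} (hab : a ≤ b)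
    (hw : ∀ x ∈ Icc a b, 0 < w x) (hf : IntervalIntegrable f volume a b)
    (hwi : IntervalIntegrable w volume a b)
    (hfw : IntervalIntegrable (fun x => f x ^ 2 / w x) volume a b) :
    (∫ x in a..b, f x) ^ 2 ≤ (∫ x in a..b, w x) * ∫ x in a..b, f x ^ 2 / w x := by
  rcases hab.eq_or_lt with rfl | hlt
  · simp
  set c := ∫ x in a..b, f x
  set I := ∫ x in a..b, w x
  set J := ∫ x in a..b, f x ^ 2 / w x
  have hI : 0 < I :=
    intervalIntegral_pos_of_pos_on hwi (fun x hx => hw x (Ioo_subset_Icc_self hx)) hlt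
  -- the square `(I f - c w)² / w` has integral `I (I J - c²)`
  have hexpand : ∀ x ∈ uIcc a b,
      (f x * I - c * w x) ^ 2 / w x = I ^ 2 * (f x ^ 2 / w x) - 2 * I * c * f x + c ^ 2 * w x := by
    intro x hx
    rw [uIcc_of_le hab] at hx
    have hwx := (hw x hx).ne'
    field_simp
    ring
  have hsq : 0 ≤ ∫ x in a..b, (f x * I - c * w x) ^ 2 / w x :=
    integral_nonneg hab fun x hx => div_nonneg (sq_nonneg _) (hw x hx).le
  rw [integral_congr hexpand,
    integral_add ((hfw.const_mul _).sub (hf.const_mul _)) (hwi.const_mul _),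
    integral_sub (hfw.const_mul _) (hf.const_mul _),
    integral_const_mul, integral_const_mul, integral_const_mul] at hsq
  nlinarith

theorem sq_le_integral_mul_integral_deriv_sq_div {Φ Φ' w : ℝ → ℝ} {a b : ℝ} (hab : a ≤ b)
    (hΦ : ∀ x ∈ Icc a b, HasDerivWithinAt Φ (Φ' x) (Icc a b) x) (hΦa : Φ a = 0)
    (hΦ' : ContinuousOn Φ' (Icc a b)) (hw : ContinuousOn w (Icc a b))
    (hwpos : ∀ x ∈ Icc a b, 0 < w x) :
    Φ b ^ 2 ≤ (∫ x in a..b, w x) * ∫ x in a..b, Φ' x ^ 2 / w x := by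
  have hFTC : ∫ x in a..b, Φ' x = Φ b := by
    rw [integral_eq_sub_of_hasDerivAt_of_le hab (fun x hx => (hΦ x hx).continuousWithinAt)
      (fun x hx => (hΦ x (Ioo_subset_Icc_self hx)).hasDerivAt (Icc_mem_nhds hx.1 hx.2))
      (hΦ'.intervalIntegrable_of_Icc hab), hΦa, sub_zero]
  rw [← hFTC]
  exact sq_integral_le_integral_mul_integral_sq_div hab hwpos (hΦ'.intervalIntegrable_of_Icc hab)
    (hw.intervalIntegrable_of_Icc hab)
    (((hΦ'.pow 2).div hw fun x hx => (hwpos x hx).ne').intervalIntegrable_of_Icc hab)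

theorem integral_energy_eq_boundary_term {p r Φ Φ' g' : ℝ → ℝ} {a b ν : ℝ} (hab : a ≤ b)
    (hΦ : ∀ x ∈ Icc a b, HasDerivWithinAt Φ (Φ' x) (Icc a b) x)
    (hg : ∀ x ∈ Icc a b, HasDerivWithinAt (fun t => Φ' t / p t) (g' x) (Icc a b) x)
    (hode : ∀ x ∈ Ioo a b, g' x = -ν * Φ x / r x)
    (hΦr : IntervalIntegrable (fun x => Φ x ^ 2 / r x) volume a b)
    (hΦ'p : IntervalIntegrable (fun x => Φ' x ^ 2 / p x) volume a b) :
    -ν * (∫ x in a..b, Φ x ^ 2 / r x) + ∫ x in a..b, Φ' x ^ 2 / p x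
      = Φ' b / p b * Φ b - Φ' a / p a * Φ a := by
  rw [← integral_const_mul, ← integral_add (hΦr.const_mul _) hΦ'p]
  refine integral_eq_sub_of_hasDerivAt_of_le hab
    (fun x hx => (hg x hx).continuousWithinAt.mul (hΦ x hx).continuousWithinAt)
    (fun x hx => ?_) ((hΦr.const_mul _).add hΦ'p)
  have hnhds := Icc_mem_nhds hx.1 hx.2
  refine (((hg x (Ioo_subset_Icc_self hx)).hasDerivAt hnhds).mul
    ((hΦ x (Ioo_subset_Icc_self hx)).hasDerivAt hnhds)).congr_deriv ?_
  rw [hode x hx]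
  ring

theorem eqOn_zero_of_integral_eq_zero_of_nonneg {f : ℝ → ℝ} {a b : ℝ} (hab : a < b)
    (hf : ContinuousOn f (Icc a b)) (hnonneg : ∀ x ∈ Icc a b, 0 ≤ f x)
    (hzero : ∫ x in a..b, f x = 0) : EqOn f 0 (Icc a b) := by
  intro x hx
  by_contra hne
  have hpos : 0 < ∫ x in a..b, f x :=
    integral_pos hab hf (fun y hy => hnonneg y (Ioc_subset_Icc_self hy))
      ⟨x, hx, (hnonneg x hx).lt_of_ne (Ne.symm hne)⟩
  exact hpos.ne' hzero

theorem sturm_liouville_no_negative_eigenvalues_critical_general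
    (a : ℝ → ℝ) (K : NNReal)
    (hlip : LipschitzOnWith K a (Set.Icc (-1 : ℝ) 0))
    (hpos : ∀ s ∈ Set.Icc (-1 : ℝ) 0, 0 < a s)
    (μcr : ℝ) (hμ : μcr = (∫ t in (-1 : ℝ)..0, a t ^ 3)⁻¹)
    (ν : ℝ) (hν : ν < 0)
    (Φ Φ' g' : ℝ → ℝ)
    (hΦ : ∀ s ∈ Set.Icc (-1 : ℝ) 0,
      HasDerivWithinAt Φ (Φ' s) (Set.Icc (-1 : ℝ) 0) s)
    (hΦ'cont : ContinuousOn Φ' (Set.Icc (-1 : ℝ) 0))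
    (hg : ∀ s ∈ Set.Icc (-1 : ℝ) 0,
      HasDerivWithinAt (fun t => Φ' t / a t ^ 3) (g' s) (Set.Icc (-1 : ℝ) 0) s)
    (hode : ∀ s ∈ Set.Ioo (-1 : ℝ) 0, g' s = -ν * Φ s / a s)
    (hbc_bottom : Φ (-1) = 0)
    (hbc_top : -(Φ' 0) / a 0 ^ 3 + μcr * Φ 0 = 0) :
    ∀ s ∈ Set.Icc (-1 : ℝ) 0, Φ s = 0 := by
  have hlt : (-1 : ℝ) < 0 := by norm_num
  have ha : ContinuousOn a (Icc (-1) 0) := hlip.continuousOn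
  have hΦc : ContinuousOn Φ (Icc (-1) 0) := fun s hs => (hΦ s hs).continuousWithinAt
  have hPc : ContinuousOn (fun s => Φ s ^ 2 / a s) (Icc (-1) 0) :=
    (hΦc.pow 2).div ha fun s hs => (hpos s hs).ne'
  have hPi : IntervalIntegrable (fun s => Φ s ^ 2 / a s) volume (-1) 0 :=
    hPc.intervalIntegrable_of_Icc hlt.le
  have hJi : IntervalIntegrable (fun s => Φ' s ^ 2 / a s ^ 3) volume (-1) 0 :=
    ((hΦ'cont.pow 2).div (ha.pow 3) fun s hs =>
      (pow_pos (hpos s hs) 3).ne').intervalIntegrable_of_Icc hlt.le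
  have hI : 0 < ∫ t in (-1 : ℝ)..0, a t ^ 3 :=
    intervalIntegral_pos_of_pos_on ((ha.pow 3).intervalIntegrable_of_Icc hlt.le)
      (fun s hs => pow_pos (hpos s (Ioo_subset_Icc_self hs)) 3) hlt
  have hCS := sq_le_integral_mul_integral_deriv_sq_div (w := fun t => a t ^ 3) hlt.le hΦ
    hbc_bottom hΦ'cont (ha.pow 3) fun s hs => pow_pos (hpos s hs) 3
  have henergy := integral_energy_eq_boundary_term hlt.le hΦ hg hode hPi hJi
  rw [hbc_bottom, mul_zero, sub_zero,
    show Φ' 0 / a 0 ^ 3 = μcr * Φ 0 by linarith [neg_div (a 0 ^ 3) (Φ' 0)]] at henergy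
  have hμJ : μcr * Φ 0 * Φ 0 ≤ ∫ t in (-1 : ℝ)..0, Φ' t ^ 2 / a t ^ 3 := by
    rw [hμ, mul_assoc, inv_mul_le_iff₀ hI]
    nlinarith
  have hP : ∫ t in (-1 : ℝ)..0, Φ t ^ 2 / a t = 0 := by
    have hPnonneg : 0 ≤ ∫ t in (-1 : ℝ)..0, Φ t ^ 2 / a t :=
      integral_nonneg hlt.le fun s hs => div_nonneg (sq_nonneg _) (hpos s hs).le
    nlinarith
  intro s hs
  have hzero := eqOn_zero_of_integral_eq_zero_of_nonneg hlt hPc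
    (fun t ht => div_nonneg (sq_nonneg _) (hpos t ht).le) hP hs
  simpa [(hpos s hs).ne'] using hzero

/-- **Lemma 3.2 (ν₀ = 0)**. The Sturm–Liouville problem
`-(Φ'/a³)' = ν Φ/a` on `(-1,0)`, `Φ(-1) = 0`,
`-Φ'(0)/a(0)³ + μcr Φ(0) = 0` at the critical spectral parameter
`μcr = (∫_{-1}^0 a³)⁻¹` has no negative eigenvalues: if `ν < 0` and `Φ` is a
`C¹` solution (with `Φ'/a³` also `C¹`, its derivative `g'` satisfying
`g' = -ν Φ/a` on `(-1,0)`), then `Φ ≡ 0` on `[-1,0]`. -/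
theorem sturm_liouville_no_negative_eigenvalues_critical
    (a : ℝ → ℝ) (K : NNReal)
    (hlip : LipschitzOnWith K a (Set.Icc (-1 : ℝ) 0))
    (hpos : ∀ s ∈ Set.Icc (-1 : ℝ) 0, 0 < a s)
    (μcr : ℝ) (hμ : μcr = (∫ t in (-1 : ℝ)..0, a t ^ 3)⁻¹)
    (ν : ℝ) (hν : ν < 0)
    (Φ Φ' g' : ℝ → ℝ)
    (hΦ : ∀ s ∈ Set.Icc (-1 : ℝ) 0,
      HasDerivWithinAt Φ (Φ' s) (Set.Icc (-1 : ℝ) 0) s)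
    (hΦ'cont : ContinuousOn Φ' (Set.Icc (-1 : ℝ) 0))
    (hg : ∀ s ∈ Set.Icc (-1 : ℝ) 0,
      HasDerivWithinAt (fun t => Φ' t / a t ^ 3) (g' s) (Set.Icc (-1 : ℝ) 0) s)
    (hg'cont : ContinuousOn g' (Set.Icc (-1 : ℝ) 0))
    (hode : ∀ s ∈ Set.Ioo (-1 : ℝ) 0, g' s = -ν * Φ s / a s)
    (hbc_bottom : Φ (-1) = 0)
    (hbc_top : -(Φ' 0) / a 0 ^ 3 + μcr * Φ 0 = 0) :
    ∀ s ∈ Set.Icc (-1 : ℝ) 0, Φ s = 0 :=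
  sturm_liouville_no_negative_eigenvalues_critical_general a K hlip hpos μcr hμ ν hν Φ Φ' g' hΦ
    hΦ'cont hg hode hbc_bottom hbc_top
end

section
/- Let t_0 > 0, let H : [0,t_0] → ℝ be continuous, and let ν ∈ ℝ. Suppose a, b, c, d : [0,t_0] → ℝ are differentiable and satisfy a'(t) = H(t) b(t), b'(t) = -ν a(t), c'(t) = H(t) d(t), d'(t) = -ν c(t) - a(t) for all t ∈ [0,t_0], with initial data a(0) = 0, b(0) = 1, c(0) = 0, d(0) = 0. Then a(t_0) d(t_0) - c(t_0) b(t_0) = -∫_0^{t_0} a(t)^2 dt. In particular, if a(t_0) ≠ 0 and a is not identically zero, then d(t_0)/a(t_0) - c(t_0) b(t_0)/a(t_0)^2 < 0. -/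
/-!
Along the flow, the Wronskian-type quantity `W = a d - c b` satisfies
`W' = a' d + a d' - c' b - c b' = H b d + a (-ν c - a) - H d b + ν c a = -a²`, and `W(0) = 0`
because `a(0) = c(0) = 0`. Integrating gives the identity; the integral of the continuous
function `a²` is positive unless `a` vanishes identically, and
`d/a - c b/a² = W/a²`.
-/

open Set MeasureTheory
open scoped Interval

theorem hasDerivWithinAt_mul_sub_mul_of_variational {a b c d : ℝ → ℝ} {h ν t : ℝ}
    {s : Set ℝ} (ha : HasDerivWithinAt a (h * b t) s t) (hb : HasDerivWithinAt b (-ν * a t) s t)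
    (hc : HasDerivWithinAt c (h * d t) s t) (hd : HasDerivWithinAt d (-ν * c t - a t) s t) :
    HasDerivWithinAt (fun t => a t * d t - c t * b t) (-(a t ^ 2)) s t :=
  ((ha.mul hd).sub (hc.mul hb)).congr_deriv (by ring)

theorem intervalIntegral.integral_eq_sub_of_hasDerivWithinAt_Icc {f f' : ℝ → ℝ} {a b : ℝ}
    (hab : a ≤ b) (hf : ∀ t ∈ Icc a b, HasDerivWithinAt f (f' t) (Icc a b) t)
    (hf' : IntervalIntegrable f' volume a b) :
    ∫ t in a..b, f' t = f b - f a :=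
  integral_eq_sub_of_hasDeriv_right_of_le hab
    (fun t ht => (hf t ht).continuousWithinAt)
    (fun t ht => ((hf t (Ioo_subset_Icc_self ht)).hasDerivAt
      (Icc_mem_nhds ht.1 ht.2)).hasDerivWithinAt) hf'

theorem intervalIntegral.integral_pos_of_continuousOn_of_nonneg {f : ℝ → ℝ} {a b x : ℝ}
    (hab : a < b) (hf : ContinuousOn f (Icc a b)) (hf₀ : ∀ y ∈ Icc a b, 0 ≤ f y)
    (hx : x ∈ Icc a b) (hfx : f x ≠ 0) : 0 < ∫ y in a..b, f y := by
  -- `f` cannot vanish on all of `Ioo a b`, whose closure is `Icc a b`.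
  obtain ⟨y, hy, hfy⟩ : ∃ y ∈ Ioo a b, f y ≠ 0 := by
    by_contra! hzero
    have hIcc : EqOn f 0 (Icc a b) :=
      EqOn.of_subset_closure hzero hf continuousOn_const Ioo_subset_Icc_self
        (closure_Ioo hab.ne).ge
    exact hfx (hIcc hx)
  have hopen : IsOpen (Ioo a b ∩ f ⁻¹' {0}ᶜ) :=
    (hf.mono Ioo_subset_Icc_self).isOpen_inter_preimage isOpen_Ioo isOpen_compl_singleton
  have hsupp : Ioo a b ∩ f ⁻¹' {0}ᶜ ⊆ Function.support f ∩ Ioc a b :=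
    fun z hz => ⟨hz.2, Ioo_subset_Ioc_self hz.1⟩
  have hnonneg : 0 ≤ᵐ[volume.restrict (Ι a b)] f := by
    rw [uIoc_of_le hab.le]
    exact ae_restrict_of_forall_mem measurableSet_Ioc
      fun z hz => hf₀ z (Ioc_subset_Icc_self hz)
  rw [integral_pos_iff_support_of_nonneg_ae' hnonneg (hf.intervalIntegrable_of_Icc hab.le)]
  exact ⟨hab, (hopen.measure_pos volume ⟨y, hy, hfy⟩).trans_le (measure_mono hsupp)⟩

theorem greens_identity_B_strictly_decreasing_general
    (t₀ : ℝ) (ht₀ : 0 < t₀)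
    (H : ℝ → ℝ)
    (ν : ℝ) (a b c d : ℝ → ℝ)
    (ha : ∀ t ∈ Set.Icc (0 : ℝ) t₀,
      HasDerivWithinAt a (H t * b t) (Set.Icc (0 : ℝ) t₀) t)
    (hb : ∀ t ∈ Set.Icc (0 : ℝ) t₀,
      HasDerivWithinAt b (-ν * a t) (Set.Icc (0 : ℝ) t₀) t)
    (hc : ∀ t ∈ Set.Icc (0 : ℝ) t₀,
      HasDerivWithinAt c (H t * d t) (Set.Icc (0 : ℝ) t₀) t)
    (hd : ∀ t ∈ Set.Icc (0 : ℝ) t₀,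
      HasDerivWithinAt d (-ν * c t - a t) (Set.Icc (0 : ℝ) t₀) t)
    (ha0 : a 0 = 0) (hc0 : c 0 = 0) :
    a t₀ * d t₀ - c t₀ * b t₀ = -∫ t in (0 : ℝ)..t₀, a t ^ 2 ∧
    ((a t₀ ≠ 0 ∧ ∃ t ∈ Set.Icc (0 : ℝ) t₀, a t ≠ 0) →
      d t₀ / a t₀ - c t₀ * b t₀ / a t₀ ^ 2 < 0) := by
  have haC : ContinuousOn a (Icc 0 t₀) := fun t ht => (ha t ht).continuousWithinAt
  have hFTC := intervalIntegral.integral_eq_sub_of_hasDerivWithinAt_Icc ht₀.le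
    (fun t ht => hasDerivWithinAt_mul_sub_mul_of_variational (ha t ht) (hb t ht) (hc t ht)
      (hd t ht))
    ((haC.pow 2).neg.intervalIntegrable_of_Icc ht₀.le)
  have hidentity : a t₀ * d t₀ - c t₀ * b t₀ = -∫ t in (0 : ℝ)..t₀, a t ^ 2 := by
    rw [intervalIntegral.integral_neg, ha0, hc0] at hFTC
    linarith
  refine ⟨hidentity, ?_⟩
  rintro ⟨hat₀, t, ht, hat⟩
  have hpos : 0 < ∫ t in (0 : ℝ)..t₀, a t ^ 2 :=
    intervalIntegral.integral_pos_of_continuousOn_of_nonneg ht₀ (haC.pow 2)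
      (fun _ _ => sq_nonneg _) ht (pow_ne_zero 2 hat)
  have hquot :
      d t₀ / a t₀ - c t₀ * b t₀ / a t₀ ^ 2 = (a t₀ * d t₀ - c t₀ * b t₀) / a t₀ ^ 2 := by
    field_simp
  rw [hquot, hidentity]
  exact div_neg_of_neg_of_pos (neg_neg_of_pos hpos) (by positivity)

/-- **Green's-identity computation** (from the proof of Lemma 3.2).
For the planar ODE system `(a,b)' = ((0, H),(-ν, 0))(a,b)` with
`(a,b)(0) = (0,1)` and its ν-derivative `(c,d) = (∂_ν a, ∂_ν b)` (which solves
`c' = H d`, `d' = -ν c - a` with `(c,d)(0) = (0,0)`), one has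
`a(t₀) d(t₀) - c(t₀) b(t₀) = -∫_0^{t₀} a(t)² dt`; in particular if `a(t₀) ≠ 0`
and `a` is not identically zero then
`d(t₀)/a(t₀) - c(t₀) b(t₀)/a(t₀)² < 0` (so `B(ν) = b(t₀;ν)/a(t₀;ν)` is
strictly decreasing in `ν`). -/
theorem greens_identity_B_strictly_decreasing
    (t₀ : ℝ) (ht₀ : 0 < t₀)
    (H : ℝ → ℝ) (hH : ContinuousOn H (Set.Icc 0 t₀))
    (ν : ℝ) (a b c d : ℝ → ℝ)
    (ha : ∀ t ∈ Set.Icc (0 : ℝ) t₀,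
      HasDerivWithinAt a (H t * b t) (Set.Icc (0 : ℝ) t₀) t)
    (hb : ∀ t ∈ Set.Icc (0 : ℝ) t₀,
      HasDerivWithinAt b (-ν * a t) (Set.Icc (0 : ℝ) t₀) t)
    (hc : ∀ t ∈ Set.Icc (0 : ℝ) t₀,
      HasDerivWithinAt c (H t * d t) (Set.Icc (0 : ℝ) t₀) t)
    (hd : ∀ t ∈ Set.Icc (0 : ℝ) t₀,
      HasDerivWithinAt d (-ν * c t - a t) (Set.Icc (0 : ℝ) t₀) t)
    (ha0 : a 0 = 0) (hb0 : b 0 = 1) (hc0 : c 0 = 0) (hd0 : d 0 = 0) :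
    a t₀ * d t₀ - c t₀ * b t₀ = -∫ t in (0 : ℝ)..t₀, a t ^ 2 ∧
    ((a t₀ ≠ 0 ∧ ∃ t ∈ Set.Icc (0 : ℝ) t₀, a t ≠ 0) →
      d t₀ / a t₀ - c t₀ * b t₀ / a t₀ ^ 2 < 0) :=
  greens_identity_B_strictly_decreasing_general t₀ ht₀ H ν a b c d ha hb hc hd ha0 hc0
end

section
/- Let a : [-1,0] → ℝ be Lipschitz continuous with a(s) > 0 for all s, let μ_cr := (∫_{-1}^0 a(t)^3 dt)^{-1}, and let F > 0 satisfy 1/F^2 < μ_cr (supercriticality). Then there exists ε_0 > 0 such that for every ε ∈ (0, ε_0) there exists a continuously differentiable function Φ̃ : [-1,0] → ℝ, with s ↦ Φ̃'(s)/a(s)^3 continuously differentiable, solving the initial value problem (Φ̃'/a^3)'(s) + (ε/F^2) Φ̃(s) = 0 on (-1,0), Φ̃(-1) = ε, Φ̃'(-1) = 1, and such that moreover Φ̃(s) > 0 and Φ̃'(s) > 0 for all s ∈ [-1,0], and -Φ̃'(0)/a(0)^3 + Φ̃(0)/F^2 < 0. -/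
/-!
Write `κ = ε / F²`, `c = a(-1)⁻³` and `ψ = Φ' / a³`. The initial value problem is equivalent to
the integral equation `Φ(s) = ε + ∫_{-1}^s a³ ψ` with `ψ(t) = c - κ ∫_{-1}^t Φ`, whose right-hand
side is a contraction in the sup norm once `κ · max a³ ≤ 1/2`; its fixed point obeys
`|Φ| ≤ 2 (ε + c · max a³)`. Hence `ψ = c + O(ε)` and `Φ(0) = c ∫ a³ + O(ε)` as `ε → 0`, so `Φ`
and `Φ'` are positive for small `ε`, and `-ψ(0) + Φ(0) / F²` tends to `c (∫ a³ / F² - 1)`, which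
is negative exactly when `F` is supercritical.
-/

open Set Filter Topology intervalIntegral BoundedContinuousFunction

noncomputable section

/-- When `Φ = picard w ε c κ Φ`, `flux c κ Φ` is `Φ' / w`. -/
def flux (c κ : ℝ) (u : ℝ → ℝ) (t : ℝ) : ℝ :=
  c - κ * ∫ x in (-1 : ℝ)..t, u x

/-- Integral form of `(Φ' / w)' = -κ Φ`, `Φ(-1) = ε`, `(Φ' / w)(-1) = c`: its fixed points on
`[-1, 0]` are the solutions. -/
def picard (w : ℝ → ℝ) (ε c κ : ℝ) (u : ℝ → ℝ) (s : ℝ) : ℝ :=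
  ε + ∫ t in (-1 : ℝ)..s, w t * flux c κ u t

lemma ContinuousOn.exists_continuous_eqOn_Icc {α β : Type*} [LinearOrder α] [TopologicalSpace α]
    [OrderTopology α] [TopologicalSpace β] {f : α → β} {x y : α} (hxy : x ≤ y)
    (hf : ContinuousOn f (Icc x y)) : ∃ g : α → β, Continuous g ∧ EqOn g f (Icc x y) :=
  ⟨IccExtend hxy ((Icc x y).domRestrict f),
    (continuousOn_iff_continuous_domRestrict.1 hf).Icc_extend', fun _ ht => IccExtend_of_mem _ _ ht⟩

lemma abs_integral_le_of_mem_Icc {f : ℝ → ℝ} {C t : ℝ} (hf : ∀ x ∈ Icc (-1 : ℝ) 0, |f x| ≤ C)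
    (hC : 0 ≤ C) (ht : t ∈ Icc (-1 : ℝ) 0) : |∫ x in (-1 : ℝ)..t, f x| ≤ C := by
  have hsub : uIoc (-1) t ⊆ Icc (-1 : ℝ) 0 := by
    rw [uIoc_of_le ht.1]
    exact fun x hx => ⟨hx.1.le, hx.2.trans ht.2⟩
  calc |∫ x in (-1 : ℝ)..t, f x| ≤ C * |t - -1| :=
        norm_integral_le_of_norm_le_const (f := f) fun x hx => hf x (hsub hx)
    _ ≤ C * 1 := by
        gcongr
        rw [abs_le]
        constructor <;> linarith [ht.1, ht.2]
    _ = C := mul_one C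

section

variable {w u v : ℝ → ℝ} {ε c κ B M s : ℝ}

lemma hasDerivAt_flux (hu : Continuous u) (t : ℝ) :
    HasDerivAt (flux c κ u) (-(κ * u t)) t :=
  (((hu.integral_hasStrictDerivAt (-1) t).hasDerivAt).const_mul κ).const_sub c

lemma continuous_flux (hu : Continuous u) : Continuous (flux c κ u) :=
  continuous_iff_continuousAt.2 fun t => (hasDerivAt_flux hu t).continuousAt

lemma hasDerivAt_picard (hw : Continuous w) (hu : Continuous u) (s : ℝ) :
    HasDerivAt (picard w ε c κ u) (w s * flux c κ u s) s :=
  (((hw.mul (continuous_flux hu)).integral_hasStrictDerivAt (-1) s).hasDerivAt).const_add ε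

lemma continuous_picard (hw : Continuous w) (hu : Continuous u) :
    Continuous (picard w ε c κ u) :=
  continuous_iff_continuousAt.2 fun s => (hasDerivAt_picard hw hu s).continuousAt

lemma picard_neg_one : picard w ε c κ u (-1) = ε := by
  simp [picard]

lemma flux_neg_one : flux c κ u (-1) = c := by
  simp [flux]

lemma abs_flux_sub_le (hu : ∀ x ∈ Icc (-1 : ℝ) 0, |u x| ≤ M) (hM : 0 ≤ M) (hκ : 0 ≤ κ)
    (hs : s ∈ Icc (-1 : ℝ) 0) : |flux c κ u s - c| ≤ κ * M := by
  rw [flux, sub_sub_cancel_left, abs_neg, abs_mul, abs_of_nonneg hκ]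
  exact mul_le_mul_of_nonneg_left (abs_integral_le_of_mem_Icc hu hM hs) hκ

lemma abs_picard_le (hw : ∀ t ∈ Icc (-1 : ℝ) 0, |w t| ≤ B) (hB : 0 ≤ B)
    (hu : ∀ x ∈ Icc (-1 : ℝ) 0, |u x| ≤ M) (hM : 0 ≤ M) (hκ : 0 ≤ κ)
    (hs : s ∈ Icc (-1 : ℝ) 0) : |picard w ε c κ u s| ≤ |ε| + B * (|c| + κ * M) := by
  have hwflux : ∀ t ∈ Icc (-1 : ℝ) 0, |w t * flux c κ u t| ≤ B * (|c| + κ * M) := by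
    intro t ht
    rw [abs_mul]
    gcongr
    · exact hw t ht
    · have := abs_flux_sub_le (c := c) hu hM hκ ht
      have := abs_sub_abs_le_abs_sub (flux c κ u t) c
      linarith
  exact (abs_add_le _ _).trans
    (by gcongr; exact abs_integral_le_of_mem_Icc hwflux (by positivity) hs)

lemma picard_sub_picard (hw : Continuous w) (hu : Continuous u) (hv : Continuous v) (s : ℝ) :
    picard w ε c κ u s - picard w ε c κ v s = picard w 0 0 κ (u - v) s := by
  rw [picard, picard, picard, add_sub_add_left_eq_sub, zero_add, ← integral_sub]
  · refine integral_congr fun t _ => ?_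
    simp only [flux, Pi.sub_apply]
    rw [integral_sub (hu.intervalIntegrable _ _) (hv.intervalIntegrable _ _)]
    ring
  · exact (hw.mul (continuous_flux hu)).intervalIntegrable _ _
  · exact (hw.mul (continuous_flux hv)).intervalIntegrable _ _

lemma le_picard (hwu : ∀ t ∈ Icc (-1 : ℝ) 0, 0 ≤ w t * flux c κ u t) (hs : s ∈ Icc (-1 : ℝ) 0) :
    ε ≤ picard w ε c κ u s :=
  le_add_of_nonneg_right <|
    integral_nonneg hs.1 fun t ht => hwu t ⟨ht.1, ht.2.trans hs.2⟩

lemma picard_le (hw : Continuous w) (hu : Continuous u) (hw₀ : ∀ t ∈ Icc (-1 : ℝ) 0, 0 ≤ w t)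
    (hM : ∀ t ∈ Icc (-1 : ℝ) 0, flux c κ u t ≤ M) :
    picard w ε c κ u 0 ≤ ε + M * ∫ t in (-1 : ℝ)..0, w t := by
  rw [picard, ← integral_const_mul]
  gcongr
  refine integral_mono_on (by norm_num) ((hw.mul (continuous_flux hu)).intervalIntegrable _ _)
    ((continuous_const.mul hw).intervalIntegrable _ _) fun t ht => ?_
  rw [mul_comm M]
  exact mul_le_mul_of_nonneg_left (hM t ht) (hw₀ t ht)

theorem exists_continuous_eq_picard (hw : Continuous w) (hwB : ∀ t ∈ Icc (-1 : ℝ) 0, |w t| ≤ B)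
    (hκ : 0 ≤ κ) (hκB : κ * B ≤ 1 / 2) :
    ∃ Φ : ℝ → ℝ, Continuous Φ ∧ (∀ s ∈ Icc (-1 : ℝ) 0, Φ s = picard w ε c κ Φ s) ∧
      ∀ s, |Φ s| ≤ 2 * (|ε| + B * |c|) := by
  have hB : 0 ≤ B := (abs_nonneg _).trans (hwB (-1) (by norm_num))
  let clamp : ℝ → ℝ := fun s => projIcc (-1 : ℝ) 0 (by norm_num) s
  have hclamp : Continuous clamp := continuous_subtype_val.comp continuous_projIcc
  -- Evaluating at `clamp s` makes `picard` bounded on all of `ℝ`.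
  let T : (ℝ →ᵇ ℝ) → (ℝ →ᵇ ℝ) := fun u =>
    .ofNormedAddCommGroup (fun s => picard w ε c κ u (clamp s))
      ((continuous_picard hw u.continuous).comp hclamp) _ fun s =>
      abs_picard_le hwB hB (fun x _ => u.norm_coe_le_norm x) (norm_nonneg u) hκ (Subtype.mem _)
  have hT : ContractingWith (1 / 2) T := by
    refine ⟨by norm_num, LipschitzWith.of_dist_le_mul fun u v =>
      (dist_le (by positivity)).2 fun s => ?_⟩
    have huv : ∀ x ∈ Icc (-1 : ℝ) 0, |(⇑u - ⇑v) x| ≤ dist u v :=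
      fun x _ => by simpa [Real.dist_eq] using dist_coe_le_dist (f := u) (g := v) x
    calc dist (T u s) (T v s) = |picard w 0 0 κ (⇑u - ⇑v) (clamp s)| :=
          picard_sub_picard hw u.continuous v.continuous _ ▸ rfl
      _ ≤ |0| + B * (|0| + κ * dist u v) :=
          abs_picard_le hwB hB huv dist_nonneg hκ (Subtype.mem _)
      _ ≤ (1 / 2 : NNReal) * dist u v := by
          simp only [abs_zero, zero_add, NNReal.coe_div, NNReal.coe_one, NNReal.coe_ofNat]
          nlinarith [dist_nonneg (x := u) (y := v)]
  set Φ := hT.fixedPoint T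
  refine ⟨Φ, Φ.continuous, fun s hs => ?_, fun s => ?_⟩
  · have hΦ : T Φ = Φ := hT.fixedPoint_isFixedPt
    conv_lhs => rw [← hΦ]
    change picard w ε c κ Φ (projIcc (-1 : ℝ) 0 _ s) = _
    rw [projIcc_of_mem _ hs]
  · have hT0 : ‖T 0‖ ≤ |ε| + B * |c| := by
      refine (norm_le (by positivity)).2 fun s => ?_
      have := abs_picard_le (u := ⇑(0 : ℝ →ᵇ ℝ)) (ε := ε) (c := c) hwB hB (fun _ _ => by simp)
        le_rfl hκ (Subtype.mem (projIcc (-1 : ℝ) 0 (by norm_num) s))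
      rwa [mul_zero, add_zero] at this
    calc |Φ s| ≤ dist 0 Φ := by rw [dist_comm, dist_zero_right]; exact Φ.norm_coe_le_norm s
      _ ≤ dist 0 (T 0) / (1 - (1 / 2 : NNReal)) := hT.dist_fixedPoint_le 0
      _ ≤ 2 * (|ε| + B * |c|) := by
          rw [dist_comm, dist_zero_right]
          norm_num
          linarith

end

theorem exists_auxiliary_function_of_small {a : ℝ → ℝ} (ha : ContinuousOn a (Icc (-1 : ℝ) 0))
    (hpos : ∀ s ∈ Icc (-1 : ℝ) 0, 0 < a s) {B c J F ε : ℝ}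
    (hB : ∀ t ∈ Icc (-1 : ℝ) 0, |a t ^ 3| ≤ B) (hc : a (-1) ^ 3 * c = 1)
    (hJ : ∫ t in (-1 : ℝ)..0, a t ^ 3 = J) (hF : 0 < F) (hε : 0 < ε)
    (hκB : ε / F ^ 2 * B ≤ 1 / 2) (hflux : ε / F ^ 2 * (2 * (ε + B * c)) < c)
    (hbdry : ε * (1 + 2 * (ε + B * c) * (1 + J / F ^ 2)) < c * (F ^ 2 - J)) :
    ∃ Φ Φ' g' : ℝ → ℝ,
      (∀ s ∈ Icc (-1 : ℝ) 0, HasDerivWithinAt Φ (Φ' s) (Icc (-1 : ℝ) 0) s) ∧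
      ContinuousOn Φ' (Icc (-1 : ℝ) 0) ∧
      (∀ s ∈ Icc (-1 : ℝ) 0,
        HasDerivWithinAt (fun t => Φ' t / a t ^ 3) (g' s) (Icc (-1 : ℝ) 0) s) ∧
      ContinuousOn g' (Icc (-1 : ℝ) 0) ∧
      (∀ s ∈ Ioo (-1 : ℝ) 0, g' s + ε / F ^ 2 * Φ s = 0) ∧
      Φ (-1) = ε ∧ Φ' (-1) = 1 ∧
      (∀ s ∈ Icc (-1 : ℝ) 0, 0 < Φ s ∧ 0 < Φ' s) ∧
      -(Φ' 0) / a 0 ^ 3 + Φ 0 / F ^ 2 < 0 := by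
  have hm1 : (-1 : ℝ) ∈ Icc (-1 : ℝ) 0 := by norm_num
  have h0 : (0 : ℝ) ∈ Icc (-1 : ℝ) 0 := by norm_num
  have hc₀ : 0 < c := pos_of_mul_pos_right (by rw [hc]; exact one_pos) (pow_pos (hpos _ hm1) 3).le
  have hB₀ : 0 ≤ B := (abs_nonneg _).trans (hB _ hm1)
  obtain ⟨b, hb, hba⟩ := ha.exists_continuous_eqOn_Icc (by norm_num)
  have hb₃ : Continuous fun t => b t ^ 3 := hb.pow 3
  have hb₃pos : ∀ t ∈ Icc (-1 : ℝ) 0, 0 < b t ^ 3 := fun t ht => hba ht ▸ pow_pos (hpos t ht) 3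
  set κ := ε / F ^ 2
  set N := 2 * (ε + B * c)
  obtain ⟨Φ, hΦc, hΦ, hΦN⟩ := exists_continuous_eq_picard (ε := ε) (c := c) hb₃
    (fun t ht => hba ht ▸ hB t ht) (by positivity) hκB
  set ψ := flux c κ Φ
  have hψ : ∀ t ∈ Icc (-1 : ℝ) 0, |ψ t - c| ≤ κ * N :=
    fun t => abs_flux_sub_le (fun x _ => by simpa [abs_of_pos hε, abs_of_pos hc₀] using hΦN x)
      (by positivity) (by positivity)
  have hΦ'pos : ∀ t ∈ Icc (-1 : ℝ) 0, 0 < b t ^ 3 * ψ t := fun t ht =>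
    mul_pos (hb₃pos t ht) (by linarith [(abs_le.1 (hψ t ht)).1])
  have hΦ'a : ∀ t ∈ Icc (-1 : ℝ) 0, b t ^ 3 * ψ t / a t ^ 3 = ψ t := fun t ht => by
    rw [hba ht, mul_div_cancel_left₀ _ (pow_pos (hpos t ht) 3).ne']
  refine ⟨Φ, fun s => b s ^ 3 * ψ s, fun s => -(κ * Φ s), fun s hs => ?_,
    (hb₃.mul (continuous_flux hΦc)).continuousOn, fun s hs => ?_,
    (continuous_const.mul hΦc).neg.continuousOn, fun s _ => neg_add_cancel _, ?_, ?_,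
    fun s hs => ⟨?_, hΦ'pos s hs⟩, ?_⟩
  · exact (hasDerivAt_picard hb₃ hΦc s).hasDerivWithinAt.congr hΦ (hΦ s hs)
  · exact (hasDerivAt_flux hΦc s).hasDerivWithinAt.congr hΦ'a (hΦ'a s hs)
  · rw [hΦ _ hm1, picard_neg_one]
  · simp only [ψ, flux_neg_one, hba hm1, hc]
  · rw [hΦ s hs]
    exact hε.trans_le (le_picard (fun t ht => (hΦ'pos t ht).le) hs)
  · have hJb : ∫ t in (-1 : ℝ)..0, b t ^ 3 = J :=
      hJ ▸ integral_congr fun t ht => by rw [hba (by rwa [uIcc_of_le (by norm_num)] at ht)]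
    have hΦ0 : Φ 0 ≤ ε + (c + κ * N) * J := by
      rw [hΦ 0 h0, ← hJb]
      exact picard_le hb₃ hΦc (fun t ht => (hb₃pos t ht).le) fun t ht =>
        by linarith [(abs_le.1 (hψ t ht)).2]
    have hψ0 := (abs_le.1 (hψ 0 h0)).1
    rw [neg_div, hΦ'a 0 h0, neg_add_lt_iff_lt_add, add_zero, div_lt_iff₀ (by positivity)]
    have hκF : κ * F ^ 2 = ε := div_mul_cancel₀ _ (by positivity)
    have hκJ : ε * (J / F ^ 2) = κ * J := by simp only [κ]; ring
    linear_combination F ^ 2 * hψ0 + hΦ0 + hbdry + N * hκF - N * hκJ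

/-- **Lemma 3.3** (existence of the auxiliary function `Φ̃`). For a supercritical
Froude number `F` (i.e. `1/F² < μcr = (∫_{-1}^0 a³)⁻¹`), for all sufficiently
small `ε > 0` there is a `C¹` solution `Φ̃` (with `Φ̃'/a³` also `C¹`) of the
initial value problem `(Φ̃'/a³)' + (ε/F²) Φ̃ = 0` on `(-1,0)`, `Φ̃(-1) = ε`,
`Φ̃'(-1) = 1`, which moreover satisfies `Φ̃ > 0` and `Φ̃' > 0` on `[-1,0]` and
`-Φ̃'(0)/a(0)³ + Φ̃(0)/F² < 0`. -/
theorem auxiliary_function_supercritical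
    (a : ℝ → ℝ) (K : NNReal)
    (hlip : LipschitzOnWith K a (Set.Icc (-1 : ℝ) 0))
    (hpos : ∀ s ∈ Set.Icc (-1 : ℝ) 0, 0 < a s)
    (μcr : ℝ) (hμ : μcr = (∫ t in (-1 : ℝ)..0, a t ^ 3)⁻¹)
    (F : ℝ) (hF : 0 < F) (hsupercritical : 1 / F ^ 2 < μcr) :
    ∃ ε₀ > (0 : ℝ), ∀ ε ∈ Set.Ioo (0 : ℝ) ε₀,
      ∃ Φ Φ' g' : ℝ → ℝ,
        -- Φ is C¹ on [-1,0] with derivative Φ'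
        (∀ s ∈ Set.Icc (-1 : ℝ) 0,
          HasDerivWithinAt Φ (Φ' s) (Set.Icc (-1 : ℝ) 0) s) ∧
        ContinuousOn Φ' (Set.Icc (-1 : ℝ) 0) ∧
        -- Φ'/a³ is C¹ on [-1,0] with derivative g'
        (∀ s ∈ Set.Icc (-1 : ℝ) 0,
          HasDerivWithinAt (fun t => Φ' t / a t ^ 3) (g' s) (Set.Icc (-1 : ℝ) 0) s) ∧
        ContinuousOn g' (Set.Icc (-1 : ℝ) 0) ∧
        -- the ODE (Φ'/a³)' + (ε/F²) Φ = 0 on (-1,0)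
        (∀ s ∈ Set.Ioo (-1 : ℝ) 0, g' s + ε / F ^ 2 * Φ s = 0) ∧
        -- initial conditions
        Φ (-1) = ε ∧ Φ' (-1) = 1 ∧
        -- positivity
        (∀ s ∈ Set.Icc (-1 : ℝ) 0, 0 < Φ s ∧ 0 < Φ' s) ∧
        -- strict sign of the boundary operator at s = 0
        -(Φ' 0) / a 0 ^ 3 + Φ 0 / F ^ 2 < 0 := by
  have ha : ContinuousOn a (Set.Icc (-1 : ℝ) 0) := hlip.continuousOn
  obtain ⟨B, hB⟩ := isCompact_Icc.exists_bound_of_continuousOn (ha.pow 3)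
  set J := ∫ t in (-1 : ℝ)..0, a t ^ 3
  set c := (a (-1) ^ 3)⁻¹
  have ha₁ : 0 < a (-1) ^ 3 := pow_pos (hpos (-1) (by norm_num)) 3
  have hc : 0 < c := inv_pos.2 ha₁
  have hF2 : 0 < F ^ 2 := by positivity
  have hJ : 0 < J := inv_pos.1 ((one_div_pos.2 hF2).trans (hμ ▸ hsupercritical))
  have hJF : J < F ^ 2 := by
    rwa [hμ, inv_eq_one_div, one_div_lt_one_div hF2 hJ] at hsupercritical
  have hsmall : ∀ᶠ ε in 𝓝 (0 : ℝ), ε / F ^ 2 * B < 1 / 2 ∧ ε / F ^ 2 * (2 * (ε + B * c)) < c ∧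
      ε * (1 + 2 * (ε + B * c) * (1 + J / F ^ 2)) < c * (F ^ 2 - J) := by
    refine ((Continuous.continuousAt ?_).eventually_lt continuousAt_const ?_).and
      (((Continuous.continuousAt ?_).eventually_lt continuousAt_const ?_).and
        ((Continuous.continuousAt ?_).eventually_lt continuousAt_const ?_))
    all_goals first | fun_prop | simp [hc, hJF]
  obtain ⟨ε₀, hε₀, hε₀small⟩ := Metric.eventually_nhds_iff.1 hsmall
  refine ⟨ε₀, hε₀, fun ε ⟨hε, hεε₀⟩ => ?_⟩
  obtain ⟨hκB, hflux, hbdry⟩ := hε₀small (by rwa [Real.dist_eq, sub_zero, abs_of_pos hε])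
  exact exists_auxiliary_function_of_small ha hpos hB (mul_inv_cancel₀ ha₁.ne')
    rfl hF hε hκB.le hflux hbdry
end
end

section
/- Let Γ : [-1,0] → ℝ be continuous with minimum value Γ_min, let D(κ) := ∫_{-1}^0 (κ + 2Γ(t))^{-1/2} dt for κ ∈ (-2Γ_min, ∞), and suppose λ ∈ (-2Γ_min, ∞) satisfies D(λ) = 1. Define μ : (-2Γ_min, ∞) → ℝ by μ(κ) := (κ - λ)/(2(1 - D(κ))) for κ ≠ λ and μ(λ) := (∫_{-1}^0 (λ + 2Γ(t))^{-3/2} dt)^{-1}. Then μ is continuously differentiable and strictly increasing on (-2Γ_min, ∞). -/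
/-!
Writing `D(κ) - D(λ) = (κ - λ) S(κ)`, where `S(κ)` integrates the divided difference of
`u ↦ u^{-1/2}` between `κ + 2Γ` and `λ + 2Γ`, turns both branches of the definition of `μ` into
the single formula `μ = -1/(2S)`; on the diagonal, `S(λ) = -½ ∫ H_s³`. The divided difference is
negative, smooth and strictly increasing in its first argument, so `S` is negative, strictly
increasing and (differentiating under the integral sign) `C¹`, and hence so is `μ`.
-/

open Set Filter Topology MeasureTheory intervalIntegral Real
open scoped Interval

section ParametricIntegral

variable {X E : Type*} [TopologicalSpace X] [LocallyCompactSpace X] [NormedAddCommGroup E]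

theorem ContinuousOn.exists_eventually_norm_le {Y : Type*} [TopologicalSpace Y] {F : X → Y → E}
    {U : Set X} {K : Set Y}
    (hF : ContinuousOn (Function.uncurry F) (U ×ˢ K)) (hU : IsOpen U) (hK : IsCompact K)
    {x₀ : X} (hx₀ : x₀ ∈ U) :
    ∃ C, ∀ᶠ x in 𝓝 x₀, ∀ t ∈ K, ‖F x t‖ ≤ C := by
  obtain ⟨L, hL, hLU, hLc⟩ := LocallyCompactSpace.local_compact_nhds x₀ U (hU.mem_nhds hx₀)
  obtain ⟨C, hC⟩ := (hLc.prod hK).exists_bound_of_continuousOn (hF.mono (prod_mono hLU le_rfl))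
  exact ⟨C, eventually_of_mem hL fun x hx t ht => hC (x, t) ⟨hx, ht⟩⟩

variable [NormedSpace ℝ E] {a b : ℝ}

theorem continuousOn_intervalIntegral_of_continuousOn_uncurry [FirstCountableTopology X]
    {F : X → ℝ → E} {U : Set X} (hF : ContinuousOn (Function.uncurry F) (U ×ˢ [[a, b]]))
    (hU : IsOpen U) :
    ContinuousOn (fun x => ∫ t in a..b, F x t) U := by
  intro x₀ hx₀
  obtain ⟨C, hC⟩ := hF.exists_eventually_norm_le hU isCompact_uIcc hx₀
  refine (continuousAt_of_dominated_interval (bound := fun _ => C) ?_ ?_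
    intervalIntegrable_const ?_).continuousWithinAt
  · filter_upwards [hU.mem_nhds hx₀] with x hx
    exact ((hF.uncurry_left x hx).mono uIoc_subset_uIcc).aestronglyMeasurable measurableSet_uIoc
  · filter_upwards [hC] with x hx
    exact ae_of_all _ fun t ht => hx t (uIoc_subset_uIcc ht)
  · refine ae_of_all _ fun t ht => ?_
    exact (hF.uncurry_right t (uIoc_subset_uIcc ht) x₀ hx₀).continuousAt (hU.mem_nhds hx₀)

theorem hasDerivAt_intervalIntegral_of_continuousOn_uncurry {F F' : ℝ → ℝ → E} {U : Set ℝ}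
    (hU : IsOpen U) (hF : ∀ x ∈ U, ContinuousOn (F x) [[a, b]])
    (hF' : ContinuousOn (Function.uncurry F') (U ×ˢ [[a, b]]))
    (hFF' : ∀ x ∈ U, ∀ t ∈ [[a, b]], HasDerivAt (F · t) (F' x t) x) {x₀ : ℝ} (hx₀ : x₀ ∈ U) :
    HasDerivAt (fun x => ∫ t in a..b, F x t) (∫ t in a..b, F' x₀ t) x₀ := by
  obtain ⟨C, hC⟩ := hF'.exists_eventually_norm_le hU isCompact_uIcc hx₀
  obtain ⟨s, hs, hsCU⟩ := (hC.and (hU.mem_nhds hx₀)).exists_mem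
  have hmeas : ∀ x ∈ U, AEStronglyMeasurable (F x) (volume.restrict (Ι a b)) := fun x hx =>
    ((hF x hx).mono uIoc_subset_uIcc).aestronglyMeasurable measurableSet_uIoc
  refine (hasDerivAt_integral_of_dominated_loc_of_deriv_le (bound := fun _ => C) hs
    (eventually_of_mem (hU.mem_nhds hx₀) hmeas) ((hF x₀ hx₀).intervalIntegrable) ?_ ?_
    intervalIntegrable_const ?_).2
  · exact ((hF'.uncurry_left x₀ hx₀).mono uIoc_subset_uIcc).aestronglyMeasurable
      measurableSet_uIoc
  · exact ae_of_all _ fun t ht x hx => (hsCU x hx).1 t (uIoc_subset_uIcc ht)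
  · exact ae_of_all _ fun t ht x hx => hFF' x (hsCU x hx).2 t (uIoc_subset_uIcc ht)

theorem contDiffOn_intervalIntegral_of_hasDerivAt {F F' : ℝ → ℝ → E} {U : Set ℝ}
    (hU : IsOpen U) (hF : ∀ x ∈ U, ContinuousOn (F x) [[a, b]])
    (hF' : ContinuousOn (Function.uncurry F') (U ×ˢ [[a, b]]))
    (hFF' : ∀ x ∈ U, ∀ t ∈ [[a, b]], HasDerivAt (F · t) (F' x t) x) :
    ContDiffOn ℝ 1 (fun x => ∫ t in a..b, F x t) U := by
  have hderiv := fun x (hx : x ∈ U) =>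
    hasDerivAt_intervalIntegral_of_continuousOn_uncurry hU hF hF' hFF' hx
  rw [show (1 : WithTop ℕ∞) = 0 + 1 from rfl, contDiffOn_succ_iff_deriv_of_isOpen hU]
  refine ⟨fun x hx => (hderiv x hx).differentiableAt.differentiableWithinAt, by simp, ?_⟩
  exact contDiffOn_zero.2 <| (continuousOn_intervalIntegral_of_continuousOn_uncurry hF' hU).congr
    fun x hx => (hderiv x hx).deriv

end ParametricIntegral

noncomputable section InvSqrtDivDiff

/-- For `u ≠ v` this is `(u^{-1/2} - v^{-1/2}) / (u - v)`; the formula extends it to `u = v` by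
the derivative `-½ v^{-3/2}`. -/
def invSqrtDivDiff (u v : ℝ) : ℝ := -(u * √v + v * √u)⁻¹

def invSqrtDivDiffDeriv (u v : ℝ) : ℝ := (√v + v / (2 * √u)) / (u * √v + v * √u) ^ 2

variable {u v : ℝ}

theorem mul_sqrt_add_mul_sqrt_pos (hu : 0 < u) (hv : 0 < v) : 0 < u * √v + v * √u := by
  have := sqrt_pos.2 hu
  have := sqrt_pos.2 hv
  positivity

theorem inv_sqrt_sub_inv_sqrt (hu : 0 < u) (hv : 0 < v) :
    (√u)⁻¹ - (√v)⁻¹ = (u - v) * invSqrtDivDiff u v := by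
  obtain ⟨a, ha, rfl⟩ : ∃ a, 0 < a ∧ u = a ^ 2 := ⟨√u, sqrt_pos.2 hu, (sq_sqrt hu.le).symm⟩
  obtain ⟨b, hb, rfl⟩ : ∃ b, 0 < b ∧ v = b ^ 2 := ⟨√v, sqrt_pos.2 hv, (sq_sqrt hv.le).symm⟩
  simp only [invSqrtDivDiff, sqrt_sq ha.le, sqrt_sq hb.le]
  field_simp
  ring

theorem invSqrtDivDiff_self (v : ℝ) : invSqrtDivDiff v v = -(1 / 2) * ((√v)⁻¹) ^ 3 := by
  rcases le_or_gt v 0 with hv | hv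
  · simp [invSqrtDivDiff, sqrt_eq_zero'.2 hv]
  · obtain ⟨b, hb, rfl⟩ : ∃ b, 0 < b ∧ v = b ^ 2 := ⟨√v, sqrt_pos.2 hv, (sq_sqrt hv.le).symm⟩
    simp only [invSqrtDivDiff, sqrt_sq hb.le]
    field_simp
    ring

theorem invSqrtDivDiff_neg (hu : 0 < u) (hv : 0 < v) : invSqrtDivDiff u v < 0 :=
  neg_neg_of_pos (inv_pos.2 (mul_sqrt_add_mul_sqrt_pos hu hv))

theorem strictMonoOn_invSqrtDivDiff (hv : 0 < v) : StrictMonoOn (invSqrtDivDiff · v) (Ioi 0) := by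
  intro u₁ hu₁ u₂ _ hlt
  have := sqrt_lt_sqrt (le_of_lt hu₁) hlt
  have := sqrt_pos.2 hv
  simp only [invSqrtDivDiff]
  rw [neg_lt_neg_iff]
  apply inv_strictAnti₀ (mul_sqrt_add_mul_sqrt_pos hu₁ hv)
  gcongr

theorem hasDerivAt_invSqrtDivDiff (hu : 0 < u) (hv : 0 < v) :
    HasDerivAt (invSqrtDivDiff · v) (invSqrtDivDiffDeriv u v) u := by
  have hden := ((hasDerivAt_id' u).mul_const √v).fun_add ((hasDerivAt_sqrt hu.ne').const_mul v)
  refine (hden.fun_inv (mul_sqrt_add_mul_sqrt_pos hu hv).ne').fun_neg.congr_deriv ?_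
  rw [invSqrtDivDiffDeriv]
  ring

theorem continuousOn_invSqrtDivDiff :
    ContinuousOn (Function.uncurry invSqrtDivDiff) (Ioi 0 ×ˢ Ioi 0) :=
  (ContinuousOn.inv₀ (by fun_prop) fun p hp => (mul_sqrt_add_mul_sqrt_pos hp.1 hp.2).ne').neg

theorem continuousOn_invSqrtDivDiffDeriv :
    ContinuousOn (Function.uncurry invSqrtDivDiffDeriv) (Ioi 0 ×ˢ Ioi 0) := by
  refine ContinuousOn.div (ContinuousOn.add (by fun_prop)
    (ContinuousOn.div (by fun_prop) (by fun_prop) fun p hp => ?_)) (by fun_prop) fun p hp => ?_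
  · exact mul_ne_zero two_ne_zero (sqrt_pos.2 hp.1).ne'
  · exact pow_ne_zero _ (mul_sqrt_add_mul_sqrt_pos hp.1 hp.2).ne'

end InvSqrtDivDiff

noncomputable def depthSlope (Γ : ℝ → ℝ) (lam κ : ℝ) : ℝ :=
  ∫ t in (-1 : ℝ)..0, invSqrtDivDiff (κ + 2 * Γ t) (lam + 2 * Γ t)

theorem depthSlope_self (Γ : ℝ → ℝ) (lam : ℝ) :
    depthSlope Γ lam lam = -(1 / 2) * ∫ t in (-1 : ℝ)..0, ((√(lam + 2 * Γ t))⁻¹) ^ 3 := by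
  simp only [depthSlope, invSqrtDivDiff_self, intervalIntegral.integral_const_mul]

section DepthSlope

variable {Γ : ℝ → ℝ} {Γmin lam κ : ℝ} (hmin : ∀ t ∈ [[(-1 : ℝ), 0]], Γmin ≤ Γ t)
include hmin

theorem add_two_mul_pos (hκ : κ ∈ Ioi (-2 * Γmin)) {t : ℝ} (ht : t ∈ [[(-1 : ℝ), 0]]) :
    0 < κ + 2 * Γ t := by
  linarith [hmin t ht, mem_Ioi.1 hκ]

variable (hΓ : ContinuousOn Γ [[(-1 : ℝ), 0]]) (hlam : lam ∈ Ioi (-2 * Γmin))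
include hΓ hlam

theorem continuousOn_uncurry_comp_add_two_mul {φ : ℝ → ℝ → ℝ}
    (hφ : ContinuousOn (Function.uncurry φ) (Ioi 0 ×ˢ Ioi 0)) :
    ContinuousOn (Function.uncurry fun κ t => φ (κ + 2 * Γ t) (lam + 2 * Γ t))
      (Ioi (-2 * Γmin) ×ˢ [[(-1 : ℝ), 0]]) := by
  have hΓ' : ContinuousOn (fun p : ℝ × ℝ => Γ p.2) (Ioi (-2 * Γmin) ×ˢ [[(-1 : ℝ), 0]]) :=
    hΓ.comp continuousOn_snd fun p hp => hp.2
  refine hφ.comp ((continuousOn_fst.add (hΓ'.const_mul 2)).prodMk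
    (continuousOn_const.add (hΓ'.const_mul 2))) fun p hp => ?_
  exact ⟨add_two_mul_pos hmin hp.1 hp.2, add_two_mul_pos hmin hlam hp.2⟩

theorem intervalIntegrable_depthSlope (hκ : κ ∈ Ioi (-2 * Γmin)) :
    IntervalIntegrable (fun t => invSqrtDivDiff (κ + 2 * Γ t) (lam + 2 * Γ t)) volume (-1) 0 :=
  ((continuousOn_uncurry_comp_add_two_mul hmin hΓ hlam continuousOn_invSqrtDivDiff).uncurry_left
    κ hκ).intervalIntegrable

theorem contDiffOn_depthSlope : ContDiffOn ℝ 1 (depthSlope Γ lam) (Ioi (-2 * Γmin)) := by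
  have hcont := continuousOn_uncurry_comp_add_two_mul hmin hΓ hlam continuousOn_invSqrtDivDiff
  refine contDiffOn_intervalIntegral_of_hasDerivAt isOpen_Ioi
    (fun κ hκ => hcont.uncurry_left κ hκ)
    (continuousOn_uncurry_comp_add_two_mul hmin hΓ hlam continuousOn_invSqrtDivDiffDeriv)
    fun κ hκ t ht => ?_
  exact (hasDerivAt_invSqrtDivDiff (add_two_mul_pos hmin hκ ht)
    (add_two_mul_pos hmin hlam ht)).comp_add_const κ (2 * Γ t)

theorem depthSlope_neg (hκ : κ ∈ Ioi (-2 * Γmin)) : depthSlope Γ lam κ < 0 := by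
  rw [depthSlope, ← neg_pos, ← intervalIntegral.integral_neg]
  refine intervalIntegral.intervalIntegral_pos_of_pos_on
    (intervalIntegrable_depthSlope hmin hΓ hlam hκ).neg (fun t ht => ?_) (by norm_num)
  have ht' : t ∈ [[(-1 : ℝ), 0]] := Ioo_subset_Icc_self.trans Icc_subset_uIcc ht
  exact neg_pos.2
    (invSqrtDivDiff_neg (add_two_mul_pos hmin hκ ht') (add_two_mul_pos hmin hlam ht'))

theorem strictMonoOn_depthSlope : StrictMonoOn (depthSlope Γ lam) (Ioi (-2 * Γmin)) := by
  intro κ₁ hκ₁ κ₂ hκ₂ hlt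
  have h₁ := intervalIntegrable_depthSlope hmin hΓ hlam hκ₁
  have h₂ := intervalIntegrable_depthSlope hmin hΓ hlam hκ₂
  rw [← sub_pos, depthSlope, depthSlope, ← intervalIntegral.integral_sub h₂ h₁]
  refine intervalIntegral.intervalIntegral_pos_of_pos_on (h₂.sub h₁) (fun t ht => ?_) (by norm_num)
  have ht' : t ∈ [[(-1 : ℝ), 0]] := Ioo_subset_Icc_self.trans Icc_subset_uIcc ht
  exact sub_pos.2 (strictMonoOn_invSqrtDivDiff (add_two_mul_pos hmin hlam ht')
    (add_two_mul_pos hmin hκ₁ ht') (add_two_mul_pos hmin hκ₂ ht') (by linarith))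

theorem integral_inv_sqrt_sub_integral_inv_sqrt (hκ : κ ∈ Ioi (-2 * Γmin)) :
    (∫ t in (-1 : ℝ)..0, (√(κ + 2 * Γ t))⁻¹) - ∫ t in (-1 : ℝ)..0, (√(lam + 2 * Γ t))⁻¹
      = (κ - lam) * depthSlope Γ lam κ := by
  have hint : ∀ k ∈ Ioi (-2 * Γmin),
      IntervalIntegrable (fun t => (√(k + 2 * Γ t))⁻¹) volume (-1) 0 :=
    fun k hk => ((continuousOn_const.add (hΓ.const_mul 2)).sqrt.inv₀
      fun t ht => (sqrt_pos.2 (add_two_mul_pos hmin hk ht)).ne').intervalIntegrable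
  rw [← integral_sub (hint κ hκ) (hint lam hlam), depthSlope,
    ← intervalIntegral.integral_const_mul]
  refine integral_congr fun t ht => ?_
  rw [inv_sqrt_sub_inv_sqrt (add_two_mul_pos hmin hκ ht) (add_two_mul_pos hmin hlam ht),
    add_sub_add_right_eq_sub]

end DepthSlope

/-- **Lemma 4.1** (main assertion). With `Γ` continuous on `[-1,0]` with minimum
value `Γmin`, `D(κ) = ∫_{-1}^0 (κ + 2Γ)^{-1/2}` the laminar depth, and
`lam` the parameter of the background flow (`D(lam) = 1`), the Froude-number
parameter `μ(κ) = (κ - lam)/(2(1 - D(κ)))` for `κ ≠ lam`, extended by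
`μ(lam) = (∫_{-1}^0 (lam + 2Γ)^{-3/2})⁻¹ = μcr`, is continuously differentiable
and strictly increasing on `(-2Γmin, ∞)`. -/
theorem froude_parameter_C1_strictly_increasing
    (Γ : ℝ → ℝ) (hΓ : ContinuousOn Γ (Set.Icc (-1 : ℝ) 0))
    (Γmin : ℝ) (hmin : IsLeast (Γ '' Set.Icc (-1 : ℝ) 0) Γmin)
    (D : ℝ → ℝ)
    (hD : ∀ κ, D κ = ∫ t in (-1 : ℝ)..0, (Real.sqrt (κ + 2 * Γ t))⁻¹)
    (lam : ℝ) (hlam : lam ∈ Set.Ioi (-2 * Γmin)) (hDlam : D lam = 1)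
    (μ : ℝ → ℝ)
    (hμ : ∀ κ, κ ≠ lam → μ κ = (κ - lam) / (2 * (1 - D κ)))
    (hμlam : μ lam = (∫ t in (-1 : ℝ)..0, ((Real.sqrt (lam + 2 * Γ t))⁻¹) ^ 3)⁻¹) :
    ContDiffOn ℝ 1 μ (Set.Ioi (-2 * Γmin)) ∧
    StrictMonoOn μ (Set.Ioi (-2 * Γmin)) := by
  have hIcc : [[(-1 : ℝ), 0]] = Icc (-1) 0 := uIcc_of_le (by norm_num)
  have hΓ' : ContinuousOn Γ [[(-1 : ℝ), 0]] := hIcc ▸ hΓ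
  have hmin' : ∀ t ∈ [[(-1 : ℝ), 0]], Γmin ≤ Γ t := fun t ht => hmin.2 ⟨t, hIcc ▸ ht, rfl⟩
  have hneg : ∀ κ ∈ Ioi (-2 * Γmin), depthSlope Γ lam κ < 0 :=
    fun κ hκ => depthSlope_neg hmin' hΓ' hlam hκ
  have hμS : EqOn μ (fun κ => -(2 * depthSlope Γ lam κ)⁻¹) (Ioi (-2 * Γmin)) := by
    intro κ hκ
    rcases eq_or_ne κ lam with rfl | hne
    · simp only [hμlam, depthSlope_self]
      ring
    · have h1D : 1 - D κ = -((κ - lam) * depthSlope Γ lam κ) := by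
        rw [← hDlam, hD, hD, ← integral_inv_sqrt_sub_integral_inv_sqrt hmin' hΓ' hlam hκ]
        ring
      rw [hμ κ hne, h1D]
      field_simp [sub_ne_zero.2 hne, (hneg κ hκ).ne]
  refine ⟨?_, fun a ha b hb hab => ?_⟩
  · refine ContDiffOn.congr ?_ hμS
    exact ((contDiffOn_const.mul (contDiffOn_depthSlope hmin' hΓ' hlam)).inv
      fun κ hκ => by linarith [hneg κ hκ]).neg
  · rw [hμS ha, hμS hb, neg_lt_neg_iff]
    exact (inv_lt_inv_of_neg (by linarith [hneg b hb]) (by linarith [hneg a ha])).2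
      (by linarith [strictMonoOn_depthSlope hmin' hΓ' hlam ha hb hab])
end

section
/- Let Γ : [-1,0] → ℝ be continuous with minimum value Γ_min, let D(κ) := ∫_{-1}^0 (κ + 2Γ(t))^{-1/2} dt for κ ∈ (-2Γ_min, ∞), suppose λ ∈ (-2Γ_min, ∞) satisfies D(λ) = 1, and let μ(κ) := (κ - λ)/(2(1 - D(κ))) for κ ≠ λ, μ(λ) := (∫_{-1}^0 (λ + 2Γ(t))^{-3/2} dt)^{-1}. Let D* := lim_{κ ↓ -2Γ_min} D(κ) ∈ (1, ∞] (this limit exists since D is strictly decreasing). If D* < ∞, then lim_{κ ↓ -2Γ_min} μ(κ) = ½ (2Γ_min + λ)/(D* - 1) > 0; if D* = ∞, then lim_{κ ↓ -2Γ_min} μ(κ) = 0. -/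
open Set Filter intervalIntegral

/-- **Lemma 4.1** (endpoint-limit assertion). With `D` the laminar depth,
`lam` the background parameter (`D(lam) = 1`) and `μ` the Froude-number
parameter, consider the limit `D* = lim_{κ ↓ -2Γmin} D(κ) ∈ (1, ∞]` (the limit
exists since `D` is strictly decreasing). If `D* < ∞` (i.e. `D` tends to a real
number `Dstar`), then `μ(κ) → ½ (2Γmin + lam)/(Dstar - 1) > 0` as
`κ ↓ -2Γmin`; if `D* = ∞` (i.e. `D` tends to `atTop`), then `μ(κ) → 0`. -/
theorem froude_parameter_endpoint_limit
    (Γ : ℝ → ℝ) (hΓ : ContinuousOn Γ (Set.Icc (-1 : ℝ) 0))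
    (Γmin : ℝ) (hmin : IsLeast (Γ '' Set.Icc (-1 : ℝ) 0) Γmin)
    (D : ℝ → ℝ)
    (hD : ∀ κ, D κ = ∫ t in (-1 : ℝ)..0, (Real.sqrt (κ + 2 * Γ t))⁻¹)
    (lam : ℝ) (hlam : lam ∈ Set.Ioi (-2 * Γmin)) (hDlam : D lam = 1)
    (μ : ℝ → ℝ)
    (hμ : ∀ κ, κ ≠ lam → μ κ = (κ - lam) / (2 * (1 - D κ)))
    (hμlam : μ lam = (∫ t in (-1 : ℝ)..0, ((Real.sqrt (lam + 2 * Γ t))⁻¹) ^ 3)⁻¹) :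
    (∀ Dstar : ℝ,
      Filter.Tendsto D (nhdsWithin (-2 * Γmin) (Set.Ioi (-2 * Γmin)))
        (nhds Dstar) →
      1 < Dstar ∧
      Filter.Tendsto μ (nhdsWithin (-2 * Γmin) (Set.Ioi (-2 * Γmin)))
        (nhds (1 / 2 * (2 * Γmin + lam) / (Dstar - 1))) ∧
      0 < 1 / 2 * (2 * Γmin + lam) / (Dstar - 1)) ∧
    (Filter.Tendsto D (nhdsWithin (-2 * Γmin) (Set.Ioi (-2 * Γmin)))
        Filter.atTop →
      Filter.Tendsto μ (nhdsWithin (-2 * Γmin) (Set.Ioi (-2 * Γmin)))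
        (nhds 0)) := by
  set a : ℝ := -2 * Γmin with ha
  have hal : a < lam := hlam
  have hΓt : ∀ t ∈ Icc (-1 : ℝ) 0, Γmin ≤ Γ t := fun t ht => hmin.2 ⟨t, ht, rfl⟩
  have hpos : ∀ κ, a < κ → ∀ t ∈ Icc (-1 : ℝ) 0, 0 < κ + 2 * Γ t := by
    intro κ hκ t ht
    have := hΓt t ht
    nlinarith
  have hcont : ∀ κ, a < κ →
      ContinuousOn (fun t => (Real.sqrt (κ + 2 * Γ t))⁻¹) (Icc (-1 : ℝ) 0) := by
    intro κ hκ
    apply ContinuousOn.inv₀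
    · exact (Real.continuous_sqrt.comp_continuousOn
        ((continuousOn_const.add (continuousOn_const.mul hΓ))))
    · intro t ht
      exact ne_of_gt (Real.sqrt_pos.2 (hpos κ hκ t ht))
  -- pointwise monotonicity of the integrand
  have hptle : ∀ κ₁ κ₂, a < κ₁ → κ₁ < κ₂ → ∀ t ∈ Icc (-1 : ℝ) 0,
      (Real.sqrt (κ₂ + 2 * Γ t))⁻¹ < (Real.sqrt (κ₁ + 2 * Γ t))⁻¹ := by
    intro κ₁ κ₂ h1 h12 t ht
    have h1' := hpos κ₁ h1 t ht
    apply inv_strictAnti₀ (Real.sqrt_pos.2 h1')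
    exact Real.sqrt_lt_sqrt h1'.le (by linarith)
  -- strict monotonicity of D
  have hDmono : ∀ κ₁ κ₂, a < κ₁ → κ₁ < κ₂ → D κ₂ < D κ₁ := by
    intro κ₁ κ₂ h1 h12
    rw [hD κ₁, hD κ₂]
    apply integral_lt_integral_of_continuousOn_of_le_of_exists_lt
      (by norm_num) (hcont κ₂ (h1.trans h12)) (hcont κ₁ h1)
    · intro t ht
      exact (hptle κ₁ κ₂ h1 h12 t (Ioc_subset_Icc_self ht)).le
    · exact ⟨0, by norm_num, hptle κ₁ κ₂ h1 h12 0 (by norm_num)⟩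
  have h2Γl : 0 < 2 * Γmin + lam := by simp only [ha] at hal; linarith
  -- basic limits on the filter
  set l := nhdsWithin a (Set.Ioi a) with hl
  have hidl : Tendsto (fun κ : ℝ => κ) l (nhds a) :=
    (continuous_id.tendsto a).mono_left nhdsWithin_le_nhds
  -- eventually κ ≠ lam and μ κ has the rational form
  have hev : ∀ᶠ κ in l, μ κ = (κ - lam) / (2 * (1 - D κ)) := by
    have : ∀ᶠ κ in l, κ < lam :=
      hidl (Iio_mem_nhds hal)
    exact this.mono fun κ hκ => hμ κ (ne_of_lt hκ)
  constructor
  · intro Dstar hDs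
    -- Dstar > 1 : pick the midpoint
    have hmid : a < (a + lam) / 2 := by linarith
    have hmidlt : (a + lam) / 2 < lam := by linarith
    have hDmid : 1 < D ((a + lam) / 2) := by
      rw [← hDlam]; exact hDmono _ _ hmid hmidlt
    have h1D : D ((a + lam) / 2) ≤ Dstar := by
      apply ge_of_tendsto hDs
      have hev2 : ∀ᶠ κ in l, κ < (a + lam) / 2 := hidl (Iio_mem_nhds hmid)
      filter_upwards [hev2, self_mem_nhdsWithin] with κ h1 h2
      exact (hDmono κ ((a + lam) / 2) h2 h1).le
    have hDstar : 1 < Dstar := lt_of_lt_of_le hDmid h1D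
    refine ⟨hDstar, ?_, ?_⟩
    · have hden : (2 * (1 - Dstar)) ≠ 0 := by intro h; nlinarith
      have : Tendsto (fun κ => (κ - lam) / (2 * (1 - D κ))) l
          (nhds ((a - lam) / (2 * (1 - Dstar)))) :=
        (hidl.sub tendsto_const_nhds).div
          (tendsto_const_nhds.mul (tendsto_const_nhds.sub hDs)) hden
      have heq : (a - lam) / (2 * (1 - Dstar)) = 1 / 2 * (2 * Γmin + lam) / (Dstar - 1) := by
        rw [ha]
        rw [div_eq_div_iff hden (by intro h; nlinarith)]
        ring
      rw [← heq]
      exact Tendsto.congr' (hev.mono fun κ h => h.symm) this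
    · apply div_pos (by linarith) (by linarith)
  · intro hDs
    have hden : Tendsto (fun κ => 2 * (D κ - 1)) l atTop := by
      apply Tendsto.const_mul_atTop (by norm_num : (0:ℝ) < 2)
      exact tendsto_atTop_add_const_right _ _ hDs
    have := (hidl.const_sub lam).div_atTop hden
    have heq : ∀ κ, (lam - κ) / (2 * (D κ - 1)) = (κ - lam) / (2 * (1 - D κ)) := by
      intro κ
      rw [← neg_div_neg_eq]
      ring_nf
    refine Tendsto.congr' (hev.mono fun κ h => h.symm) ?_
    exact Tendsto.congr (fun κ => heq κ) this
end

section
/- Let a : [-1,0] → ℝ be Lipschitz continuous with a(s) > 0 for all s; set λ := 1/a(0)^2, Γ(s) := 1/(2a(s)^2) - 1/(2a(0)^2), Γ_min := min Γ, and for κ ∈ (-2Γ_min, ∞) let K_κ(s) := ∫_{-1}^s (κ + 2Γ(t))^{-1/2} dt. Fix μ > 0 and define the flow force of a laminar flow K by 𝒮(K) := ∫_{-1}^0 [1/(2K'(s)^2) + 1/(2a(s)^2) - μ (K(s) - 1)] K'(s) ds. Then for every κ ∈ (-2Γ_min, ∞): 𝒮(K_κ) = ∫_{-1}^0 (κ +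 2Γ(t))^{1/2} dt + ((λ - κ)/2) K_κ(0) - (μ/2)(K_κ(0) - 1)^2 + μ/2. -/
/-!
Since `1 / (2 a²) = Γ + λ / 2`, along `K_κ' = (κ + 2Γ)^{-1/2}` the integrand of the flow force is
`√(κ + 2Γ) + ((λ - κ) / 2) K_κ' - μ (K_κ - 1) K_κ'`. The middle term integrates to
`((λ - κ) / 2) K_κ(0)`, and the last one is the derivative of `(μ / 2) (K_κ - 1)²`, where
`K_κ(-1) = 0`.
-/

open MeasureTheory intervalIntegral Set
open scoped Interval

theorem integral_primitive_sub_mul_eq {w : ℝ → ℝ} {a b : ℝ} (hw : ContinuousOn w [[a, b]])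
    (c : ℝ) :
    ∫ s in a..b, ((∫ t in a..s, w t) - c) * w s
      = (∫ t in a..b, w t) ^ 2 / 2 - c * ∫ t in a..b, w t := by
  have hprim : ∀ x ∈ Ioo (min a b) (max a b),
      HasDerivWithinAt (fun s => ∫ t in a..s, w t) (w x) (Ioi x) x := by
    intro x hx
    refine (integral_hasDerivAt_right ?_ ?_ ?_).hasDerivWithinAt
    · exact (hw.mono (uIcc_subset_uIcc_left (Ioo_subset_Icc_self hx))).intervalIntegrable
    · exact (hw.mono Ioo_subset_Icc_self).stronglyMeasurableAtFilter isOpen_Ioo x hx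
    · exact hw.continuousAt (Icc_mem_nhds hx.1 hx.2)
  have hsubst := integral_comp_mul_deriv'' (g := fun u => u - c)
    (continuousOn_primitive_interval hw.integrableOn_uIcc) hprim hw (by fun_prop)
  simp only [Function.comp_def, integral_same, integral_sub intervalIntegrable_id
    intervalIntegrable_const, integral_id, intervalIntegral.integral_const] at hsubst
  rw [hsubst, smul_eq_mul]
  ring

theorem integral_add_mul_sub_mul_primitive_sub_mul {f w : ℝ → ℝ} {a b : ℝ}
    (hf : ContinuousOn f [[a, b]]) (hw : ContinuousOn w [[a, b]]) (d m c : ℝ) :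
    ∫ s in a..b, f s + d * w s - m * (((∫ t in a..s, w t) - c) * w s)
      = (∫ s in a..b, f s) + d * (∫ s in a..b, w s)
          - m * ((∫ s in a..b, w s) ^ 2 / 2 - c * ∫ s in a..b, w s) := by
  have hpw : IntervalIntegrable (fun s => ((∫ t in a..s, w t) - c) * w s) volume a b :=
    (((continuousOn_primitive_interval hw.integrableOn_uIcc).sub continuousOn_const).mul
      hw).intervalIntegrable
  rw [integral_sub (hf.intervalIntegrable.add (hw.intervalIntegrable.const_mul d))
      (hpw.const_mul m),
    integral_add hf.intervalIntegrable (hw.intervalIntegrable.const_mul d),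
    intervalIntegral.integral_const_mul, intervalIntegral.integral_const_mul,
    integral_primitive_sub_mul_eq hw]

theorem flowForce_integrand_eq {x : ℝ} (hx : 0 ≤ x) (c m y : ℝ) :
    (1 / (2 * ((√x)⁻¹) ^ 2) + c - m * y) * (√x)⁻¹
      = √x + (c - x / 2) * (√x)⁻¹ - m * (y * (√x)⁻¹) := by
  have hsq : 1 / (2 * ((√x)⁻¹) ^ 2) = x / 2 := by
    rw [inv_pow, Real.sq_sqrt hx, one_div, mul_inv, inv_inv]; ring
  have hdiv : x * (√x)⁻¹ = √x := by rw [← div_eq_mul_inv, Real.div_sqrt]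
  rw [hsq]
  linear_combination hdiv

theorem flow_force_laminar_evaluation_general
    (a : ℝ → ℝ) (K : NNReal)
    (hlip : LipschitzOnWith K a (Set.Icc (-1 : ℝ) 0))
    (hpos : ∀ s ∈ Set.Icc (-1 : ℝ) 0, 0 < a s)
    (lam : ℝ) (hlam : lam = 1 / a 0 ^ 2)
    (Γ : ℝ → ℝ) (hΓ : ∀ s, Γ s = 1 / (2 * a s ^ 2) - 1 / (2 * a 0 ^ 2))
    (Γmin : ℝ) (hmin : IsLeast (Γ '' Set.Icc (-1 : ℝ) 0) Γmin)
    (Kf : ℝ → ℝ → ℝ)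
    (hK : ∀ κ s, Kf κ s = ∫ t in (-1 : ℝ)..s, (Real.sqrt (κ + 2 * Γ t))⁻¹)
    (μ : ℝ) :
    ∀ κ ∈ Set.Ioi (-2 * Γmin),
      (∫ s in (-1 : ℝ)..0,
          (1 / (2 * ((Real.sqrt (κ + 2 * Γ s))⁻¹) ^ 2) + 1 / (2 * a s ^ 2)
            - μ * (Kf κ s - 1)) * (Real.sqrt (κ + 2 * Γ s))⁻¹)
        = (∫ t in (-1 : ℝ)..0, Real.sqrt (κ + 2 * Γ t))
          + (lam - κ) / 2 * Kf κ 0 - μ / 2 * (Kf κ 0 - 1) ^ 2 + μ / 2 := by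
  intro κ hκ
  have hI : [[(-1 : ℝ), 0]] = Icc (-1) 0 := uIcc_of_le (by norm_num)
  have hg : ∀ s ∈ [[(-1 : ℝ), 0]], 0 < κ + 2 * Γ s := fun s hs => by
    linarith [hmin.2 (mem_image_of_mem Γ (hI ▸ hs)), mem_Ioi.1 hκ]
  have hΓc : ContinuousOn Γ [[(-1 : ℝ), 0]] := by
    have ha := hlip.continuousOn
    rw [funext hΓ, hI]
    exact (continuousOn_const.div (by fun_prop)
      fun s hs => by have := hpos s hs; positivity).sub continuousOn_const
  have hsqrt : ContinuousOn (fun t => √(κ + 2 * Γ t)) [[(-1 : ℝ), 0]] := by fun_prop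
  have hw : ContinuousOn (fun t => (√(κ + 2 * Γ t))⁻¹) [[(-1 : ℝ), 0]] :=
    hsqrt.inv₀ fun t ht => (Real.sqrt_pos.2 (hg t ht)).ne'
  simp only [hK]
  rw [integral_congr (g := fun s => √(κ + 2 * Γ s) + (lam - κ) / 2 * (√(κ + 2 * Γ s))⁻¹
      - μ * (((∫ t in (-1 : ℝ)..s, (√(κ + 2 * Γ t))⁻¹) - 1) * (√(κ + 2 * Γ s))⁻¹))
      fun s hs => by
        rw [flowForce_integrand_eq (hg s hs).le]
        congr 3
        rw [hΓ, hlam]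
        ring,
    integral_add_mul_sub_mul_primitive_sub_mul hsqrt hw]
  ring

/-- **Flow force along the laminar family** (from the proof of Lemma 6.1).
With `a = H_s > 0` Lipschitz, `lam = 1/a(0)²`,
`Γ(s) = 1/(2a(s)²) - 1/(2a(0)²)` with minimum `Γmin`,
`K_κ(s) = ∫_{-1}^s (κ + 2Γ)^{-1/2}` the laminar flow with parameter
`κ > -2Γmin`, and `μ = 1/F² > 0`, the flow force
`𝒮(K_κ) = ∫_{-1}^0 [1/(2K_κ'²) + 1/(2a²) - μ(K_κ - 1)] K_κ' ds`
evaluates to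
`∫_{-1}^0 (κ + 2Γ)^{1/2} + ((lam - κ)/2) K_κ(0) - (μ/2)(K_κ(0) - 1)² + μ/2`. -/
theorem flow_force_laminar_evaluation
    (a : ℝ → ℝ) (K : NNReal)
    (hlip : LipschitzOnWith K a (Set.Icc (-1 : ℝ) 0))
    (hpos : ∀ s ∈ Set.Icc (-1 : ℝ) 0, 0 < a s)
    (lam : ℝ) (hlam : lam = 1 / a 0 ^ 2)
    (Γ : ℝ → ℝ) (hΓ : ∀ s, Γ s = 1 / (2 * a s ^ 2) - 1 / (2 * a 0 ^ 2))
    (Γmin : ℝ) (hmin : IsLeast (Γ '' Set.Icc (-1 : ℝ) 0) Γmin)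
    (Kf : ℝ → ℝ → ℝ)
    (hK : ∀ κ s, Kf κ s = ∫ t in (-1 : ℝ)..s, (Real.sqrt (κ + 2 * Γ t))⁻¹)
    (μ : ℝ) (hμ : 0 < μ) :
    ∀ κ ∈ Set.Ioi (-2 * Γmin),
      (∫ s in (-1 : ℝ)..0,
          (1 / (2 * ((Real.sqrt (κ + 2 * Γ s))⁻¹) ^ 2) + 1 / (2 * a s ^ 2)
            - μ * (Kf κ s - 1)) * (Real.sqrt (κ + 2 * Γ s))⁻¹)
        = (∫ t in (-1 : ℝ)..0, Real.sqrt (κ + 2 * Γ t))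
          + (lam - κ) / 2 * Kf κ 0 - μ / 2 * (Kf κ 0 - 1) ^ 2 + μ / 2 :=
  flow_force_laminar_evaluation_general a K hlip hpos lam hlam Γ hΓ Γmin hmin Kf hK μ
end

section
/- Let a : [-1,0] → ℝ be Lipschitz continuous with a(s) > 0 for all s, and let μ_cr := (∫_{-1}^0 a(t)^3 dt)^{-1}. Define φ₁(s) := ∫_{-1}^s a(t)^3 dt and w₂(s) := φ₁(s)/a(s). Then: (i) φ₁(-1) = 0, φ₁ is continuously differentiable with φ₁'(s)/a(s)^3 ≡ 1 (so (φ₁'/a^3)' ≡ 0), and -φ₁'(0)/a(0)^3 + μ_cr φ₁(0) = 0; thus u₁ := (φ₁, 0) satisfies L u₁ = 0 and lies in the domain of L; (ii) w₂(-1) = 0 and a(s) w₂(s) = φ₁(s) for all s, so u₂ := (0, w₂) satisfies L u₂ = u₁ (where L(φ,w) = (a w, -(φ'/a^3)')) and lies in the domain of L. Hence u₁ and u₂ are an eigenvector and a generalized eigenvector of L for the eigenvalue 0. -/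
/-- **Lemma 5.2(i)** (eigenvector and generalized eigenvector of `L` at the
eigenvalue 0). With `a = H_s > 0` Lipschitz, `μcr = (∫_{-1}^0 a³)⁻¹`,
`φ₁(s) = ∫_{-1}^s a³` and `w₂ = φ₁/a`:
(i) `φ₁(-1) = 0`, `φ₁` is `C¹` with `φ₁' = a³` (so `φ₁'/a³ ≡ 1` and
`(φ₁'/a³)' ≡ 0`), and the boundary condition `-φ₁'(0)/a(0)³ + μcr φ₁(0) = 0`
holds; hence `u₁ = (φ₁, 0)` lies in the domain of
`L(φ,w) = (a w, -(φ'/a³)')` and satisfies `L u₁ = 0`;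
(ii) `w₂(-1) = 0` and `a w₂ = φ₁`, so `u₂ = (0, w₂)` lies in the domain of `L`
and satisfies `L u₂ = u₁`. -/
theorem eigenvector_generalized_eigenvector_L
    (a : ℝ → ℝ) (K : NNReal)
    (hlip : LipschitzOnWith K a (Set.Icc (-1 : ℝ) 0))
    (hpos : ∀ s ∈ Set.Icc (-1 : ℝ) 0, 0 < a s)
    (μcr : ℝ) (hμ : μcr = (∫ t in (-1 : ℝ)..0, a t ^ 3)⁻¹)
    (φ₁ w₂ : ℝ → ℝ)
    (hφ₁ : ∀ s, φ₁ s = ∫ t in (-1 : ℝ)..s, a t ^ 3)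
    (hw₂ : ∀ s, w₂ s = φ₁ s / a s) :
    -- (i): u₁ = (φ₁, 0) is an eigenvector of L for the eigenvalue 0
    φ₁ (-1) = 0 ∧
    (∀ s ∈ Set.Icc (-1 : ℝ) 0,
      HasDerivWithinAt φ₁ (a s ^ 3) (Set.Icc (-1 : ℝ) 0) s) ∧
    (∀ s ∈ Set.Icc (-1 : ℝ) 0, a s ^ 3 / a s ^ 3 = 1) ∧
    (∀ s ∈ Set.Icc (-1 : ℝ) 0,
      HasDerivWithinAt (fun t => a t ^ 3 / a t ^ 3) 0 (Set.Icc (-1 : ℝ) 0) s) ∧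
    -(a 0 ^ 3) / a 0 ^ 3 + μcr * φ₁ 0 = 0 ∧
    0 < φ₁ 0 ∧
    -- (ii): u₂ = (0, w₂) is a generalized eigenvector with L u₂ = u₁
    w₂ (-1) = 0 ∧
    (∀ s ∈ Set.Icc (-1 : ℝ) 0, a s * w₂ s = φ₁ s) := by
  have hacont : ContinuousOn a (Set.Icc (-1 : ℝ) 0) := hlip.continuousOn
  have hne : ∀ s ∈ Set.Icc (-1 : ℝ) 0, a s ≠ 0 := fun s hs => (hpos s hs).ne'
  -- clamp function
  set c : ℝ → ℝ := fun t => max (-1) (min 0 t) with hc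
  have hcmem : ∀ t, c t ∈ Set.Icc (-1 : ℝ) 0 := by
    intro t
    constructor
    · exact le_max_left _ _
    · simp [hc]
  have hceq : ∀ t ∈ Set.Icc (-1 : ℝ) 0, c t = t := by
    rintro t ⟨h1, h2⟩
    simp [hc, min_eq_right h2, max_eq_right h1]
  have hccont : Continuous c := by
    exact continuous_const.max (continuous_const.min continuous_id)
  set g : ℝ → ℝ := fun t => a (c t) ^ 3 with hg
  have hgcont : Continuous g := by
    exact (hacont.comp_continuous hccont hcmem).pow 3
  have hgeq : ∀ t ∈ Set.Icc (-1 : ℝ) 0, g t = a t ^ 3 := by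
    intro t ht; simp [hg, hceq t ht]
  -- key: the integrals agree for s ∈ Icc
  have hint : ∀ s ∈ Set.Icc (-1 : ℝ) 0,
      φ₁ s = ∫ t in (-1 : ℝ)..s, g t := by
    intro s hs
    rw [hφ₁ s]
    refine intervalIntegral.integral_congr ?_
    intro t ht
    have : t ∈ Set.Icc (-1 : ℝ) 0 := by
      rcases ht with ⟨h1, h2⟩
      have huIcc : Set.uIcc (-1 : ℝ) s ⊆ Set.Icc (-1 : ℝ) 0 := by
        rw [Set.uIcc_of_le hs.1]
        exact Set.Icc_subset_Icc le_rfl hs.2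
      exact huIcc ⟨h1, h2⟩
    exact (hgeq t this).symm
  have hderivg : ∀ s : ℝ, HasDerivAt (fun u => ∫ t in (-1 : ℝ)..u, g t) (g s) s := by
    intro s
    exact intervalIntegral.integral_hasDerivAt_right
      (hgcont.intervalIntegrable _ _)
      (hgcont.stronglyMeasurable.stronglyMeasurableAtFilter)
      hgcont.continuousAt
  have hderiv : ∀ s ∈ Set.Icc (-1 : ℝ) 0,
      HasDerivWithinAt φ₁ (a s ^ 3) (Set.Icc (-1 : ℝ) 0) s := by
    intro s hs
    have h1 := (hderivg s).hasDerivWithinAt (s := Set.Icc (-1 : ℝ) 0)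
    rw [hgeq s hs] at h1
    exact h1.congr (fun t ht => hint t ht) (hint s hs)
  have hratio : ∀ s ∈ Set.Icc (-1 : ℝ) 0, a s ^ 3 / a s ^ 3 = 1 := by
    intro s hs
    exact div_self (pow_ne_zero 3 (hne s hs))
  -- positivity of the total integral
  have hintpos : 0 < ∫ t in (-1 : ℝ)..0, a t ^ 3 := by
    apply intervalIntegral.intervalIntegral_pos_of_pos_on
    · apply ContinuousOn.intervalIntegrable
      rw [Set.uIcc_of_le (by norm_num : (-1 : ℝ) ≤ 0)]
      exact (hacont.pow 3)
    · intro x hx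
      exact pow_pos (hpos x ⟨hx.1.le, hx.2.le⟩) 3
    · norm_num
  have h0mem : (0 : ℝ) ∈ Set.Icc (-1 : ℝ) 0 := by norm_num
  have hm1mem : (-1 : ℝ) ∈ Set.Icc (-1 : ℝ) 0 := by norm_num
  have hφ0 : φ₁ 0 = ∫ t in (-1 : ℝ)..0, a t ^ 3 := hφ₁ 0
  refine ⟨?_, hderiv, hratio, ?_, ?_, ?_, ?_, ?_⟩
  · rw [hφ₁ (-1), intervalIntegral.integral_same]
  · intro s hs
    exact (hasDerivWithinAt_const s _ (1 : ℝ)).congr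
      (fun t ht => hratio t ht) (hratio s hs)
  · rw [neg_div, hratio 0 h0mem, hμ, hφ0, inv_mul_cancel₀ hintpos.ne']
    ring
  · rw [hφ0]; exact hintpos
  · rw [hw₂ (-1), hφ₁ (-1), intervalIntegral.integral_same, zero_div]
  · intro s hs
    rw [hw₂ s, mul_div_cancel₀ _ (hne s hs)]
end

section
/- Let a : [-1,0] → ℝ be Lipschitz continuous with a(s) > 0 for all s, let μ_cr := (∫_{-1}^0 a(t)^3 dt)^{-1}, and let φ₁(s) := ∫_{-1}^s a(t)^3 dt, w₂(s) := φ₁(s)/a(s). Then there is no continuously differentiable function φ₃ : [-1,0] → ℝ with s ↦ φ₃'(s)/a(s)^3 continuously differentiable satisfying -(φ₃'/a^3)'(s) = w₂(s) on (-1,0), φ₃(-1) = 0, and -φ₃'(0)/a(0)^3 + μ_cr φ₃(0) = 0. Consequently the generalized eigenvector chain of L at the eigenvalue 0 terminates at length two, i.e., the eigenvalue 0 of L has algebraic multiplicity exactly 2. -/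
open MeasureTheory Set intervalIntegral

/-- **Lemma 5.2(i), multiplicity two**. With `a = H_s > 0` Lipschitz,
`μcr = (∫_{-1}^0 a³)⁻¹`, `φ₁(s) = ∫_{-1}^s a³` and `w₂ = φ₁/a`, there is no
`C¹` function `φ₃` (with `φ₃'/a³` also `C¹`, its derivative denoted `g'`)
satisfying `-(φ₃'/a³)' = w₂` on `(-1,0)`, `φ₃(-1) = 0`, and
`-φ₃'(0)/a(0)³ + μcr φ₃(0) = 0`. Consequently the generalized-eigenvector
chain of `L` at the eigenvalue `0` terminates at length two, i.e. the
eigenvalue `0` of `L` has algebraic multiplicity exactly `2`. -/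
theorem no_third_generalized_eigenvector
    (a : ℝ → ℝ) (K : NNReal)
    (hlip : LipschitzOnWith K a (Set.Icc (-1 : ℝ) 0))
    (hpos : ∀ s ∈ Set.Icc (-1 : ℝ) 0, 0 < a s)
    (μcr : ℝ) (hμ : μcr = (∫ t in (-1 : ℝ)..0, a t ^ 3)⁻¹)
    (φ₁ w₂ : ℝ → ℝ)
    (hφ₁ : ∀ s, φ₁ s = ∫ t in (-1 : ℝ)..s, a t ^ 3)
    (hw₂ : ∀ s, w₂ s = φ₁ s / a s) :
    ¬ ∃ φ₃ φ₃' g' : ℝ → ℝ,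
      (∀ s ∈ Set.Icc (-1 : ℝ) 0,
        HasDerivWithinAt φ₃ (φ₃' s) (Set.Icc (-1 : ℝ) 0) s) ∧
      ContinuousOn φ₃' (Set.Icc (-1 : ℝ) 0) ∧
      (∀ s ∈ Set.Icc (-1 : ℝ) 0,
        HasDerivWithinAt (fun t => φ₃' t / a t ^ 3) (g' s)
          (Set.Icc (-1 : ℝ) 0) s) ∧
      ContinuousOn g' (Set.Icc (-1 : ℝ) 0) ∧
      (∀ s ∈ Set.Ioo (-1 : ℝ) 0, -(g' s) = w₂ s) ∧
      φ₃ (-1) = 0 ∧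
      -(φ₃' 0) / a 0 ^ 3 + μcr * φ₃ 0 = 0 := by
  rintro ⟨φ₃, φ₃', g', hφd, hφ'c, hgd, hg'c, heq, hbc1, hbc2⟩
  have hca : ContinuousOn a (Icc (-1 : ℝ) 0) := hlip.continuousOn
  have hca3 : ContinuousOn (fun t => a t ^ 3) (Icc (-1 : ℝ) 0) := hca.pow 3
  have ha3pos : ∀ s ∈ Icc (-1 : ℝ) 0, 0 < a s ^ 3 := fun s hs => pow_pos (hpos s hs) 3
  have huIcc : uIcc (-1 : ℝ) 0 = Icc (-1 : ℝ) 0 := uIcc_of_le (by norm_num)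
  have hint_a3 : IntervalIntegrable (fun t => a t ^ 3) volume (-1) 0 :=
    (huIcc ▸ hca3).intervalIntegrable
  -- positivity of ∫ a³
  have hμ0pos : 0 < ∫ t in (-1 : ℝ)..0, a t ^ 3 :=
    intervalIntegral_pos_of_pos_on hint_a3
      (fun x hx => ha3pos x ⟨hx.1.le, hx.2.le⟩) (by norm_num)
  have hμcrpos : 0 < μcr := by rw [hμ]; exact inv_pos.mpr hμ0pos
  have hμmul : μcr * ∫ t in (-1 : ℝ)..0, a t ^ 3 = 1 := by
    rw [hμ]; exact inv_mul_cancel₀ (ne_of_gt hμ0pos)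
  -- continuity of φ₁ and w₂ on [-1,0]
  have hφ₁c : ContinuousOn φ₁ (Icc (-1 : ℝ) 0) := by
    have : ContinuousOn (fun x => ∫ t in (-1 : ℝ)..x, a t ^ 3) (uIcc (-1 : ℝ) 0) :=
      continuousOn_primitive_interval (huIcc ▸ (hca3.integrableOn_compact isCompact_Icc))
    rw [huIcc] at this
    exact this.congr (fun s _ => hφ₁ s)
  have hw₂c : ContinuousOn w₂ (Icc (-1 : ℝ) 0) :=
    (hφ₁c.div hca (fun s hs => ne_of_gt (hpos s hs))).congr (fun s _ => hw₂ s)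
  -- positivity of w₂ on (-1,0)
  have hw₂pos : ∀ x ∈ Ioo (-1 : ℝ) 0, 0 < w₂ x := by
    intro x hx
    have hφ₁pos : 0 < φ₁ x := by
      rw [hφ₁ x]
      refine intervalIntegral_pos_of_pos_on ?_ (fun t ht => ha3pos t ⟨ht.1.le, ht.2.le.trans hx.2.le⟩) hx.1
      have hsub : uIcc (-1 : ℝ) x ⊆ Icc (-1 : ℝ) 0 := by
        rw [uIcc_of_le hx.1.le]; exact Icc_subset_Icc le_rfl hx.2.le
      exact (hca3.mono hsub).intervalIntegrable
    rw [hw₂ x]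
    exact div_pos hφ₁pos (hpos x ⟨hx.1.le, hx.2.le⟩)
  -- the quotient g = φ₃'/a³
  set g : ℝ → ℝ := fun t => φ₃' t / a t ^ 3 with hg
  have hgc : ContinuousOn g (Icc (-1 : ℝ) 0) := fun s hs => (hgd s hs).continuousWithinAt
  have hφc : ContinuousOn φ₃ (Icc (-1 : ℝ) 0) := fun s hs => (hφd s hs).continuousWithinAt
  -- FTC for g on [t,0]
  have hgFTC : ∀ t ∈ Icc (-1 : ℝ) 0, g t = g 0 + ∫ s in t..0, w₂ s := by
    intro t ht
    have hsub : Icc t (0 : ℝ) ⊆ Icc (-1 : ℝ) 0 := Icc_subset_Icc ht.1 le_rfl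
    have hftc : ∫ s in t..0, g' s = g 0 - g t := by
      refine integral_eq_sub_of_hasDeriv_right_of_le ht.2 (hgc.mono hsub) (fun x hx => ?_) ?_
      · have hx' : x ∈ Ioo (-1 : ℝ) 0 := ⟨lt_of_le_of_lt ht.1 hx.1, hx.2⟩
        exact ((hgd x ⟨hx'.1.le, hx'.2.le⟩).hasDerivAt
          (Icc_mem_nhds hx'.1 hx'.2)).hasDerivWithinAt
      · exact ((hg'c.mono hsub).mono (by rw [uIcc_of_le ht.2])).intervalIntegrable
    have hcong : ∫ s in t..0, g' s = ∫ s in t..0, -w₂ s := by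
      rw [integral_of_le ht.2, integral_of_le ht.2,
        MeasureTheory.integral_Ioc_eq_integral_Ioo, MeasureTheory.integral_Ioc_eq_integral_Ioo]
      refine setIntegral_congr_fun measurableSet_Ioo (fun x hx => ?_)
      have : -(g' x) = w₂ x := heq x ⟨lt_of_le_of_lt ht.1 hx.1, hx.2⟩
      linarith
    rw [hcong, intervalIntegral.integral_neg] at hftc
    linarith
  -- FTC for φ₃ on [-1,0]
  have hφFTC : φ₃ 0 = ∫ s in (-1 : ℝ)..0, φ₃' s := by
    have hftc : ∫ s in (-1 : ℝ)..0, φ₃' s = φ₃ 0 - φ₃ (-1) := by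
      refine integral_eq_sub_of_hasDeriv_right_of_le (by norm_num) hφc (fun x hx => ?_) ?_
      · exact ((hφd x ⟨hx.1.le, hx.2.le⟩).hasDerivAt (Icc_mem_nhds hx.1 hx.2)).hasDerivWithinAt
      · exact (huIcc ▸ hφ'c).intervalIntegrable
    rw [hbc1, sub_zero] at hftc
    exact hftc.symm
  -- rewrite φ₃' = g·a³
  have hφ'eq : ∀ s ∈ Icc (-1 : ℝ) 0, φ₃' s = g s * a s ^ 3 := fun s hs =>
    (div_mul_cancel₀ (φ₃' s) (ne_of_gt (ha3pos s hs))).symm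
  have hφ0 : φ₃ 0 = ∫ s in (-1 : ℝ)..0, g s * a s ^ 3 := by
    rw [hφFTC]
    exact intervalIntegral.integral_congr (fun s hs => hφ'eq s (huIcc ▸ hs))
  -- the key integral I
  set I : ℝ := ∫ s in (-1 : ℝ)..0, (g s - g 0) * a s ^ 3 with hI
  have hint_ga3 : IntervalIntegrable (fun s => g s * a s ^ 3) volume (-1) 0 :=
    (huIcc ▸ (hgc.mul hca3)).intervalIntegrable
  have hint_g0a3 : IntervalIntegrable (fun s => g 0 * a s ^ 3) volume (-1) 0 :=
    hint_a3.const_mul _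
  have hIsplit : I = φ₃ 0 - g 0 * ∫ t in (-1 : ℝ)..0, a t ^ 3 := by
    have : I = ∫ s in (-1 : ℝ)..0, (g s * a s ^ 3 - g 0 * a s ^ 3) := by
      rw [hI]; exact intervalIntegral.integral_congr (fun s _ => by ring)
    rw [this, intervalIntegral.integral_sub hint_ga3 hint_g0a3,
      intervalIntegral.integral_const_mul, hφ0]
  -- positivity of I
  have hIpos : 0 < I := by
    refine intervalIntegral_pos_of_pos_on ?_ (fun x hx => ?_) (by norm_num)
    · exact (huIcc ▸ ((hgc.sub continuousOn_const).mul hca3)).intervalIntegrable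
    · have hx' : x ∈ Icc (-1 : ℝ) 0 := ⟨hx.1.le, hx.2.le⟩
      have h1 : g x - g 0 = ∫ s in x..0, w₂ s := by
        rw [hgFTC x hx']; ring
      have h2 : 0 < ∫ s in x..0, w₂ s := by
        refine intervalIntegral_pos_of_pos_on ?_ (fun t ht => hw₂pos t ⟨lt_trans hx.1 ht.1, ht.2⟩) hx.2
        have hsub : uIcc x (0 : ℝ) ⊆ Icc (-1 : ℝ) 0 := by
          rw [uIcc_of_le hx.2.le]; exact Icc_subset_Icc hx.1.le le_rfl
        exact (hw₂c.mono hsub).intervalIntegrable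
      exact mul_pos (h1 ▸ h2) (ha3pos x hx')
  -- boundary condition: g 0 = μcr * φ₃ 0
  have hg0 : g 0 = μcr * φ₃ 0 := by
    have h := hbc2
    rw [neg_div] at h
    have : g 0 = φ₃' 0 / a 0 ^ 3 := rfl
    linarith
  -- derive the contradiction
  have h0 : μcr * I = 0 := by
    rw [hIsplit]
    calc μcr * (φ₃ 0 - g 0 * ∫ t in (-1 : ℝ)..0, a t ^ 3)
        = μcr * φ₃ 0 - g 0 * (μcr * ∫ t in (-1 : ℝ)..0, a t ^ 3) := by ring
      _ = 0 := by rw [hμmul, ← hg0]; ring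
  exact absurd h0 (ne_of_gt (mul_pos hμcrpos hIpos))
end

section
/- Let h : ℝ × [-1,0] → ℝ be continuously differentiable with inf_{ℝ×[-1,0]} ∂_s h > 0 and h(r,-1) = 0 for all r ∈ ℝ. Then the map G(r,s) := (r, h(r,s) - 1) is injective on ℝ × [-1,0], its image is exactly the set {(x,y) ∈ ℝ² : -1 ≤ y ≤ h(x,0) - 1}, and G restricts to a C¹ diffeomorphism from the open strip ℝ × (-1,0) onto the open set {(x,y) : -1 < y < h(x,0) - 1}; in particular the first component of G⁻¹ is (x,y) ↦ x, and its second component is a C¹ function of (x,y). -/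
/-!
For each `r` the fibre map `s ↦ h r s - 1` has derivative `≥ δ > 0`, so it is a strictly increasing
continuous bijection of `[-1, 0]` onto `[-1, h r 0 - 1]` and of `(-1, 0)` onto `(-1, h r 0 - 1)`.
Hence `G(r, s) = (r, h r s - 1)` is injective with the stated images, and `Function.invFunOn G`
on the open strip inverts it. There the derivative of `G` is `(u, v) ↦ (u, A (u, v))` with
`A (0, 1) = ∂ₛh > 0`, an isomorphism, so the inverse function theorem gives a `C¹` local inverse
near every point, which agrees with the global inverse by injectivity.
-/

open Set Function Filter Topology

section Monotone

variable {f f' : ℝ → ℝ} {a b : ℝ}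

theorem Convex.strictMonoOn_of_hasDerivWithinAt_pos {D : Set ℝ} (hD : Convex ℝ D)
    (hf : ∀ x ∈ D, HasDerivWithinAt f (f' x) D x) (hf' : ∀ x ∈ D, 0 < f' x) :
    StrictMonoOn f D :=
  _root_.strictMonoOn_of_hasDerivWithinAt_pos hD (fun x hx => (hf x hx).continuousWithinAt)
    (fun x hx => (hf x (interior_subset hx)).mono interior_subset)
    (fun x hx => hf' x (interior_subset hx))

theorem image_Icc_of_hasDerivWithinAt_pos (hab : a ≤ b)
    (hf : ∀ x ∈ Icc a b, HasDerivWithinAt f (f' x) (Icc a b) x) (hf' : ∀ x ∈ Icc a b, 0 < f' x) :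
    f '' Icc a b = Icc (f a) (f b) :=
  ContinuousOn.image_Icc_of_monotoneOn hab (fun x hx => (hf x hx).continuousWithinAt)
    ((convex_Icc a b).strictMonoOn_of_hasDerivWithinAt_pos hf hf').monotoneOn

theorem image_Ioo_of_hasDerivWithinAt_pos (hab : a ≤ b)
    (hf : ∀ x ∈ Icc a b, HasDerivWithinAt f (f' x) (Icc a b) x) (hf' : ∀ x ∈ Icc a b, 0 < f' x) :
    f '' Ioo a b = Ioo (f a) (f b) :=
  ContinuousOn.image_Ioo_of_strictMonoOn hab (fun x hx => (hf x hx).continuousWithinAt)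
    ((convex_Icc a b).strictMonoOn_of_hasDerivWithinAt_pos hf hf')

end Monotone

section Fibrewise

variable {α β γ : Type*}

theorem injOn_univ_prod_of_injOn_fibre {f : α → β → γ} {t : Set β} (hf : ∀ a, InjOn (f a) t) :
    InjOn (fun p : α × β => (p.1, f p.1 p.2)) (univ ×ˢ t) := by
  rintro ⟨a, b⟩ ⟨-, hb⟩ ⟨a', b'⟩ ⟨-, hb'⟩ heq
  simp only [Prod.mk.injEq] at heq
  obtain ⟨rfl, hfb⟩ := heq
  exact Prod.ext rfl (hf a hb hb' hfb)

theorem image_univ_prod_fibre {f : α → β → γ} {t : Set β} {S : α → Set γ}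
    (hf : ∀ a, f a '' t = S a) :
    (fun p : α × β => (p.1, f p.1 p.2)) '' (univ ×ˢ t) = {q | q.2 ∈ S q.1} := by
  ext ⟨a, c⟩
  simp only [mem_image, mem_prod, mem_univ, true_and, Prod.exists, Prod.mk.injEq, mem_ofPred_eq,
    ← hf]
  constructor
  · rintro ⟨a, b, hb, rfl, rfl⟩
    exact ⟨b, hb, rfl⟩
  · rintro ⟨b, hb, rfl⟩
    exact ⟨a, b, hb, rfl, rfl⟩

end Fibrewise

section Derivative

variable {𝕜 : Type*} [NontriviallyNormedField 𝕜] {E : Type*} [NormedAddCommGroup E]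
  [NormedSpace 𝕜 E]

theorem HasFDerivAt.exists_equiv_prodMk_fst {f : E × 𝕜 → 𝕜} {A : E × 𝕜 →L[𝕜] 𝕜} {p : E × 𝕜}
    {d : 𝕜} (hf : HasFDerivAt f A p) (hd : HasDerivAt (fun t => f (p.1, t)) d p.2) (hd₀ : d ≠ 0) :
    ∃ e : (E × 𝕜) ≃L[𝕜] E × 𝕜, HasFDerivAt (fun q => (q.1, f q)) (e : E × 𝕜 →L[𝕜] E × 𝕜) p := by
  have hA : A (0, 1) = d :=
    (hf.comp_hasDerivAt p.2 ((hasDerivAt_const _ _).prodMk (hasDerivAt_id _))).unique hd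
  -- `(u, v) ↦ (u, A (u, 0) + v * A (0, 1))`
  set e := (ContinuousLinearEquiv.refl 𝕜 E).skewProd
    (ContinuousLinearEquiv.unitsEquivAut 𝕜 (Units.mk0 _ (hA ▸ hd₀))) (A.comp (.inl 𝕜 E 𝕜))
  have he : (e : E × 𝕜 →L[𝕜] E × 𝕜) = (ContinuousLinearMap.fst 𝕜 E 𝕜).prod A := by
    ext <;> simp [e, show A (0, 0) = 0 from map_zero A]
  exact ⟨e, he ▸ hasFDerivAt_fst.prodMk hf⟩

end Derivative

theorem ContDiffOn.invFunOn {𝕂 : Type*} [RCLike 𝕂]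
    {E : Type*} [NormedAddCommGroup E] [NormedSpace 𝕂 E] [CompleteSpace E]
    {F : Type*} [NormedAddCommGroup F] [NormedSpace 𝕂 F]
    {f : E → F} {U : Set E} {n : WithTop ℕ∞} (hf : ContDiffOn 𝕂 n f U) (hU : IsOpen U)
    (hn : n ≠ 0) (hinj : InjOn f U)
    (hf' : ∀ x ∈ U, ∃ f' : E ≃L[𝕂] F, HasFDerivAt f (f' : E →L[𝕂] F) x) :
    ContDiffOn 𝕂 n (Function.invFunOn f U) (f '' U) := by
  rintro _ ⟨x, hx, rfl⟩
  obtain ⟨f', hf'x⟩ := hf' x hx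
  have hfx : ContDiffAt 𝕂 n f x := hf.contDiffAt (hU.mem_nhds hx)
  have hstrict := hfx.hasStrictFDerivAt' hf'x hn
  set g := hstrict.localInverse f f' x
  have hgU : ∀ᶠ y in 𝓝 (f x), g y ∈ U :=
    hstrict.localInverse_continuousAt.preimage_mem_nhds
      (by rw [hstrict.localInverse_apply_image]; exact hU.mem_nhds hx)
  have hinv : Function.invFunOn f U =ᶠ[𝓝 (f x)] g := by
    filter_upwards [hstrict.eventually_right_inverse, hgU] with y hy hyU
    calc Function.invFunOn f U y = Function.invFunOn f U (f (g y)) := by rw [hy]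
      _ = g y := hinj.leftInvOn_invFunOn hyU
  exact ((hfx.to_localInverse hf'x hn).congr_of_eventuallyEq hinv).contDiffWithinAt

/-- **Diffeomorphism step in the equivalence theorem** (Theorem 2.2,
(iii) ⟹ (ii)). Let `h = h(r,s)` be `C¹` on the strip `ℝ × [-1,0]` with
`∂_s h ≥ δ > 0` and `h(r,-1) = 0`. Then `G(r,s) = (r, h(r,s) - 1)` is injective
on the closed strip, its image is exactly `{(x,y) : -1 ≤ y ≤ h(x,0) - 1}`, and
`G` restricts to a `C¹` diffeomorphism from the open strip `ℝ × (-1,0)` onto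
the open set `{(x,y) : -1 < y < h(x,0) - 1}`; the first component of `G⁻¹` is
`(x,y) ↦ x` and its second component is a `C¹` function of `(x,y)`. -/
theorem height_function_diffeomorphism
    (h : ℝ → ℝ → ℝ)
    (hC1 : ContDiffOn ℝ 1 (fun p : ℝ × ℝ => h p.1 p.2)
      (Set.univ ×ˢ Set.Icc (-1 : ℝ) 0))
    (δ : ℝ) (hδ : 0 < δ)
    (hs : ℝ → ℝ → ℝ)
    (hders : ∀ r : ℝ, ∀ s ∈ Set.Icc (-1 : ℝ) 0,
      HasDerivWithinAt (fun s' => h r s') (hs r s) (Set.Icc (-1 : ℝ) 0) s ∧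
      δ ≤ hs r s)
    (hbot : ∀ r : ℝ, h r (-1) = 0)
    (G : ℝ × ℝ → ℝ × ℝ) (hG : ∀ p, G p = (p.1, h p.1 p.2 - 1)) :
    -- G is injective on the closed strip
    Set.InjOn G (Set.univ ×ˢ Set.Icc (-1 : ℝ) 0) ∧
    -- its image is exactly {(x,y) : -1 ≤ y ≤ h(x,0) - 1}
    G '' (Set.univ ×ˢ Set.Icc (-1 : ℝ) 0)
      = {q : ℝ × ℝ | -1 ≤ q.2 ∧ q.2 ≤ h q.1 0 - 1} ∧
    -- G : open strip → open fluid region is a C¹ diffeomorphism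
    (G '' (Set.univ ×ˢ Set.Ioo (-1 : ℝ) 0)
        = {q : ℝ × ℝ | -1 < q.2 ∧ q.2 < h q.1 0 - 1} ∧
      ∃ Ginv : ℝ × ℝ → ℝ × ℝ,
        ContDiffOn ℝ 1 Ginv {q : ℝ × ℝ | -1 < q.2 ∧ q.2 < h q.1 0 - 1} ∧
        (∀ p ∈ Set.univ ×ˢ Set.Ioo (-1 : ℝ) 0, Ginv (G p) = p) ∧
        (∀ q ∈ {q : ℝ × ℝ | -1 < q.2 ∧ q.2 < h q.1 0 - 1},
          G (Ginv q) = q ∧ Ginv q ∈ Set.univ ×ˢ Set.Ioo (-1 : ℝ) 0 ∧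
          (Ginv q).1 = q.1)) := by
  obtain rfl : G = fun p => (p.1, h p.1 p.2 - 1) := funext hG
  have hfibre : ∀ r, ∀ s ∈ Icc (-1 : ℝ) 0,
      HasDerivWithinAt (fun s => h r s - 1) (hs r s) (Icc (-1) 0) s := fun r s hs' =>
    (hders r s hs').1.sub_const 1
  have hpos : ∀ r, ∀ s ∈ Icc (-1 : ℝ) 0, 0 < hs r s := fun r s hs' =>
    hδ.trans_le (hders r s hs').2
  have hle : (-1 : ℝ) ≤ 0 := by norm_num
  have hinj : InjOn _ (univ ×ˢ Icc (-1 : ℝ) 0) := injOn_univ_prod_of_injOn_fibre fun r =>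
    ((convex_Icc _ _).strictMonoOn_of_hasDerivWithinAt_pos (hfibre r) (hpos r)).injOn
  set U : Set (ℝ × ℝ) := univ ×ˢ Ioo (-1) 0
  have hU : U ⊆ univ ×ˢ Icc (-1) 0 := prod_mono_right Ioo_subset_Icc_self
  have hopen : IsOpen U := isOpen_univ.prod isOpen_Ioo
  have hGU : (fun p : ℝ × ℝ => (p.1, h p.1 p.2 - 1)) '' U =
      {q : ℝ × ℝ | -1 < q.2 ∧ q.2 < h q.1 0 - 1} :=
    image_univ_prod_fibre (f := fun r s => h r s - 1) fun r => by
      rw [image_Ioo_of_hasDerivWithinAt_pos hle (hfibre r) (hpos r), hbot, zero_sub]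
  have hderiv : ∀ p ∈ U, ∃ e : (ℝ × ℝ) ≃L[ℝ] ℝ × ℝ,
      HasFDerivAt (fun p : ℝ × ℝ => (p.1, h p.1 p.2 - 1)) (e : ℝ × ℝ →L[ℝ] ℝ × ℝ) p := by
    rintro p hp
    have hp' := Ioo_subset_Icc_self hp.2
    exact (((hC1.differentiableOn one_ne_zero).differentiableAt
      (mem_of_superset (hopen.mem_nhds hp) hU)).hasFDerivAt.sub_const 1).exists_equiv_prodMk_fst
      (((hders _ _ hp').1.hasDerivAt (Icc_mem_nhds hp.2.1 hp.2.2)).sub_const 1) (hpos _ _ hp').ne'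
  have hsmooth := (contDiffOn_fst.prodMk ((hC1.mono hU).sub contDiffOn_const)).invFunOn hopen
    one_ne_zero (hinj.mono hU) hderiv
  refine ⟨hinj, ?_, hGU, Function.invFunOn _ U, hGU ▸ hsmooth,
    fun p hp => (hinj.mono hU).leftInvOn_invFunOn hp, fun q hq => ?_⟩
  · exact image_univ_prod_fibre (f := fun r s => h r s - 1) fun r => by
      rw [image_Icc_of_hasDerivWithinAt_pos hle (hfibre r) (hpos r), hbot, zero_sub]
  · rw [← hGU] at hq
    have hq' := Function.invFunOn_eq hq
    exact ⟨hq', Function.invFunOn_mem hq, (Prod.ext_iff.1 hq').1⟩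
end
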